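/- arXiv:1601.00439 — 10 statements merged into one kernel-verified Lean document; each statement's English description precedes it below -/
import Mathlib

section
/- Let C, X, T, Y be random variables on a measurable space (Ω, 𝓕), where C takes values in a standard Borel space 𝒞, X in ℝ, T in {0,1} and Y in ℝ, and let P₀, P₁, Pₛ be probability measures on (Ω, 𝓕) with P₀(T=0)=1, P₁(T=1)=1, and Y integrable under each of P₀, P₁, Pₛ. Assume: (4a) the joint law of (C, X) is the same under P₀, P₁ and Pₛ; (4b) there exists a measurable function u : 𝒞×ℝ×{0,1} → ℝ such that u(C, X, T) is a version of the conditional expectation E_{P_σ}[Y | σ(C, X, T)] simultaneously for every σ ∈ {0, 1, s}; (sharp condition) for every σ ∈ {0, 1, s} and every bounded measurable h : {0,1} → ℝ, E_{P_σ}[h(T) | σ(C, X)] = E_{P_σ}[h(T) | σ(X)] P_σ-almost surely. Then Y is independent of the regime given (X, T): there exists a measurable function g : ℝ×{0,1} → ℝ such that g(X, T) is a version of E_{P_σ}[Y | σ(X, T)] simultaneously for every σ ∈ {0, 1, s}. -/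
/-!
By (4b) and the tower property, `E[Y | X, T] = E[u(C, X, T) | X, T]`, so it suffices to show that
`g(x, t) := E[u(C, X, t) | X = x]` works. On the event `{T = t}` the sharp condition says that `T`
carries no information on `C` beyond `X`, whence
`E[1{T = t} u(C, X, t) | X] = P(T = t | X) E[u(C, X, t) | X] = E[1{T = t} g(X, t) | X]`.
The conditional expectation defining `g` only depends on the law of `(C, X)`, which (4a) makes
common to all regimes, so one `g` serves every regime; `u(·, ·, t)` is integrable for that law
because `u(C, X, T) = u(C, X, t)` in the regime forcing `T = t`.
-/

open MeasureTheory

section CondExp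

variable {Ω : Type*} {m m₁ m₂ m0 : MeasurableSpace Ω} {μ : Measure Ω} [IsFiniteMeasure μ]

theorem integral_mul_condExp (hm : m ≤ m0) {f g : Ω → ℝ} (hf : StronglyMeasurable[m] f)
    (hfg : Integrable (f * g) μ) (hg : Integrable g μ) :
    ∫ ω, f ω * μ[g|m] ω ∂μ = ∫ ω, f ω * g ω ∂μ := by
  rw [← integral_condExp hm (f := fun ω => f ω * g ω)]
  exact integral_congr_ae (condExp_mul_of_stronglyMeasurable_left hf hfg hg).symm

theorem integral_mul_condExp_eq_of_condExp_eq (h₁₂ : m₁ ≤ m₂) (h₂ : m₂ ≤ m0) {χ W : Ω → ℝ}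
    (hχ : AEStronglyMeasurable χ μ) {R : ℝ} (hχR : ∀ᵐ ω ∂μ, |χ ω| ≤ R)
    (hχ_eq : μ[χ|m₂] =ᵐ[μ] μ[χ|m₁]) (hW : StronglyMeasurable[m₂] W) (hWi : Integrable W μ) :
    ∫ ω, χ ω * μ[W|m₁] ω ∂μ = ∫ ω, χ ω * W ω ∂μ := by
  have h₁ : m₁ ≤ m0 := h₁₂.trans h₂
  have hχ_norm : ∀ᵐ ω ∂μ, ‖χ ω‖ ≤ R := by simpa only [Real.norm_eq_abs] using hχR
  have hp_norm : ∀ᵐ ω ∂μ, ‖μ[χ|m₁] ω‖ ≤ R := by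
    simpa only [Real.norm_eq_abs] using ae_bdd_abs_condExp_of_ae_bdd_abs hχR
  have hp_meas : StronglyMeasurable[m₁] (μ[χ|m₁]) := stronglyMeasurable_condExp
  calc ∫ ω, χ ω * μ[W|m₁] ω ∂μ
      = ∫ ω, μ[W|m₁] ω * μ[χ|m₁] ω ∂μ := by
        simp_rw [mul_comm (χ _)]
        exact (integral_mul_condExp h₁ stronglyMeasurable_condExp
          (integrable_condExp.mul_bdd hχ hχ_norm) (.of_bound hχ R hχ_norm)).symm
    _ = ∫ ω, μ[χ|m₁] ω * W ω ∂μ := by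
        simp_rw [mul_comm (μ[W|m₁] _)]
        exact integral_mul_condExp h₁ hp_meas
          (hWi.bdd_mul (hp_meas.mono h₁).aestronglyMeasurable hp_norm) hWi
    _ = ∫ ω, W ω * μ[χ|m₂] ω ∂μ := by
        refine integral_congr_ae ?_
        filter_upwards [hχ_eq] with ω hω
        rw [hω, mul_comm]
    _ = ∫ ω, χ ω * W ω ∂μ := by
        rw [integral_mul_condExp h₂ hW (hWi.mul_bdd hχ hχ_norm) (.of_bound hχ R hχ_norm)]
        simp_rw [mul_comm (W _)]

end CondExp

section Pushforward

variable {Ω β γ : Type*} [MeasurableSpace Ω] [MeasurableSpace β] [mγ : MeasurableSpace γ]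
  {μ : Measure Ω} [IsFiniteMeasure μ]

theorem exists_measurable_comp_eq_condExp (ν : Measure β) (k : β → γ) (F : β → ℝ) :
    ∃ f : γ → ℝ, Measurable f ∧ ν[F|mγ.comap k] = f ∘ k :=
  stronglyMeasurable_condExp.measurable.exists_eq_measurable_comp

theorem comp_ae_eq_condExp_comp {φ : Ω → β} (hφ : Measurable φ) {ν : Measure β}
    (hμν : μ.map φ = ν) {k : β → γ} (hk : Measurable k) {F : β → ℝ} (hF : Integrable F ν)
    {f : γ → ℝ} (hf : Measurable f) (hfF : f ∘ k =ᵐ[ν] ν[F|mγ.comap k]) :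
    f ∘ k ∘ φ =ᵐ[μ] μ[F ∘ φ|mγ.comap (k ∘ φ)] := by
  subst hμν
  have hfk : Integrable (f ∘ k) (μ.map φ) := integrable_condExp.congr hfF.symm
  refine ae_eq_condExp_of_forall_setIntegral_eq (hk.comp hφ).comap_le (hF.comp_measurable hφ)
    (fun _ _ _ => (hfk.comp_measurable hφ).integrableOn) ?_
    (hf.comp (comap_measurable _)).aestronglyMeasurable
  rintro _ ⟨B, hB, rfl⟩ -
  have hkB : MeasurableSet[mγ.comap k] (k ⁻¹' B) := ⟨B, hB, rfl⟩
  calc ∫ ω in φ ⁻¹' (k ⁻¹' B), f (k (φ ω)) ∂μ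
      = ∫ y in k ⁻¹' B, f (k y) ∂μ.map φ :=
        (setIntegral_map (hk hB) hfk.aestronglyMeasurable hφ.aemeasurable).symm
    _ = ∫ y in k ⁻¹' B, (μ.map φ)[F|mγ.comap k] y ∂μ.map φ :=
        setIntegral_congr_ae (hk hB) (hfF.mono fun _ h _ => h)
    _ = ∫ y in k ⁻¹' B, F y ∂μ.map φ := setIntegral_condExp hk.comap_le hF hkB
    _ = ∫ ω in φ ⁻¹' (k ⁻¹' B), F (φ ω) ∂μ :=
        setIntegral_map (hk hB) hF.aestronglyMeasurable hφ.aemeasurable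

end Pushforward

section Decomposition

variable {Ω 𝒳 α : Type*} [Fintype α] [DecidableEq α] {X : Ω → 𝒳} {T : Ω → α}

lemma indicator_preimage_prodMk_eq_sum (B : Set (𝒳 × α)) (H : Ω → α → ℝ) (ω : Ω) :
    ((fun ω => (X ω, T ω)) ⁻¹' B).indicator (fun ω => H ω (T ω)) ω
      = ∑ t, (if T ω = t then 1 else 0) * (X ⁻¹' {x | (x, t) ∈ B}).indicator (H · t) ω := by
  simp only [ite_mul, one_mul, zero_mul, Finset.sum_ite_eq, Finset.mem_univ, if_true]
  by_cases h : (X ω, T ω) ∈ B <;> simp [h]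

variable [MeasurableSpace Ω] [MeasurableSpace 𝒳] [MeasurableSpace α] [MeasurableSingletonClass α]
  {μ : Measure Ω}

lemma integrable_apply_of_forall (hT : Measurable T) {H : Ω → α → ℝ}
    (hH : ∀ t, Integrable (H · t) μ) : Integrable (fun ω => H ω (T ω)) μ := by
  have hsum : (fun ω => H ω (T ω)) = fun ω => ∑ t, (T ⁻¹' {t}).indicator (H · t) ω := by
    ext ω
    classical
    simp [Set.indicator_apply]
  rw [hsum]
  exact integrable_finsetSum _ fun t _ => (hH t).indicator (hT (measurableSet_singleton t))

lemma setIntegral_preimage_prodMk_eq_sum (hX : Measurable X) (hT : Measurable T)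
    {B : Set (𝒳 × α)} (hB : MeasurableSet B) {H : Ω → α → ℝ}
    (hH : ∀ t, Integrable (H · t) μ) :
    ∫ ω in (fun ω => (X ω, T ω)) ⁻¹' B, H ω (T ω) ∂μ
      = ∑ t, ∫ ω, (if T ω = t then 1 else 0) * (X ⁻¹' {x | (x, t) ∈ B}).indicator (H · t) ω ∂μ := by
  rw [← integral_indicator ((hX.prodMk hT) hB)]
  simp_rw [indicator_preimage_prodMk_eq_sum]
  refine integral_finsetSum _ fun t _ => ?_
  refine ((hH t).indicator (hX (measurable_prodMk_right hB))).bdd_mul (c := 1) ?_ ?_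
  · exact (Measurable.ite (hT (measurableSet_singleton t)) measurable_const
      measurable_const).aestronglyMeasurable
  · exact .of_forall fun ω => by split_ifs <;> simp

end Decomposition

section SharpDesign

variable {Ω 𝒞 𝒳 α : Type*} [MeasurableSpace Ω] [MeasurableSpace 𝒞] [MeasurableSpace 𝒳]
  [MeasurableSpace α] [Fintype α] [DecidableEq α] [MeasurableSingletonClass α]
  {μ : Measure Ω} [IsFiniteMeasure μ] {C : Ω → 𝒞} {X : Ω → 𝒳} {T : Ω → α}

theorem ae_eq_condExp_prodMk_of_treatment_condIndep (hC : Measurable C) (hX : Measurable X)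
    (hT : Measurable T) {Y : Ω → ℝ} (hY : Integrable Y μ) {u : 𝒞 × 𝒳 × α → ℝ}
    (hYu : (fun ω => u (C ω, X ω, T ω)) =ᵐ[μ]
      μ[Y | MeasurableSpace.comap (fun ω => (C ω, X ω, T ω)) inferInstance])
    (hsharp : ∀ h : α → ℝ,
      μ[(fun ω => h (T ω)) | MeasurableSpace.comap (fun ω => (C ω, X ω)) inferInstance]
        =ᵐ[μ] μ[(fun ω => h (T ω)) | MeasurableSpace.comap X inferInstance])
    (hu : ∀ t, Measurable fun p : 𝒞 × 𝒳 => u (p.1, p.2, t))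
    (hui : ∀ t, Integrable (fun ω => u (C ω, X ω, t)) μ)
    {g : 𝒳 × α → ℝ} (hg : Measurable g)
    (hgu : ∀ t, (fun ω => g (X ω, t)) =ᵐ[μ]
      μ[(fun ω => u (C ω, X ω, t)) | MeasurableSpace.comap X inferInstance]) :
    (fun ω => g (X ω, T ω)) =ᵐ[μ]
      μ[Y | MeasurableSpace.comap (fun ω => (X ω, T ω)) inferInstance] := by
  have hCX : Measurable fun ω => (C ω, X ω) := hC.prodMk hX
  have hCXT : Measurable fun ω => (C ω, X ω, T ω) := hC.prodMk (hX.prodMk hT)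
  have hX_le_CX : MeasurableSpace.comap X inferInstance
      ≤ MeasurableSpace.comap (fun ω => (C ω, X ω)) inferInstance :=
    Measurable.comap_le (f := X) (comap_measurable _).snd
  have hXT_le_CXT : MeasurableSpace.comap (fun ω => (X ω, T ω)) inferInstance
      ≤ MeasurableSpace.comap (fun ω => (C ω, X ω, T ω)) inferInstance :=
    Measurable.comap_le (f := fun ω => (X ω, T ω)) (comap_measurable _).snd
  have hgi : ∀ t, Integrable (fun ω => g (X ω, t)) μ :=
    fun t => integrable_condExp.congr (hgu t).symm
  refine ae_eq_condExp_of_forall_setIntegral_eq (hX.prodMk hT).comap_le hY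
    (fun _ _ _ => (integrable_apply_of_forall hT hgi).integrableOn) ?_
    (hg.comp (comap_measurable _)).aestronglyMeasurable
  rintro _ ⟨B, hB, rfl⟩ -
  have hXB : ∀ t, MeasurableSet[MeasurableSpace.comap X inferInstance] (X ⁻¹' {x | (x, t) ∈ B}) :=
    fun t => ⟨_, measurable_prodMk_right hB, rfl⟩
  have hB_CXT : MeasurableSet[MeasurableSpace.comap (fun ω => (C ω, X ω, T ω)) inferInstance]
      ((fun ω => (X ω, T ω)) ⁻¹' B) := hXT_le_CXT _ ⟨B, hB, rfl⟩
  have hterm : ∀ t, ∫ ω, (if T ω = t then 1 else 0) * (X ⁻¹' {x | (x, t) ∈ B}).indicator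
        (fun ω => g (X ω, t)) ω ∂μ
      = ∫ ω, (if T ω = t then 1 else 0) * (X ⁻¹' {x | (x, t) ∈ B}).indicator
        (fun ω => u (C ω, X ω, t)) ω ∂μ := by
    intro t
    have hW : StronglyMeasurable[MeasurableSpace.comap (fun ω => (C ω, X ω)) inferInstance]
        ((X ⁻¹' {x | (x, t) ∈ B}).indicator fun ω => u (C ω, X ω, t)) :=
      ((hu t).comp (comap_measurable _)).stronglyMeasurable.indicator (hX_le_CX _ (hXB t))
    rw [← integral_mul_condExp_eq_of_condExp_eq (χ := fun ω => if T ω = t then 1 else 0)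
      hX_le_CX hCX.comap_le (Measurable.ite (hT (measurableSet_singleton t)) measurable_const
        measurable_const).aestronglyMeasurable (R := 1)
      (.of_forall fun ω => by split_ifs <;> simp)
      (hsharp fun s => if s = t then 1 else 0) hW
      ((hui t).indicator (hX (measurable_prodMk_right hB)))]
    exact integral_congr_ae (Filter.EventuallyEq.rfl.mul
      (((hgu t).indicator).trans (condExp_indicator (hui t) (hXB t)).symm))
  calc ∫ ω in (fun ω => (X ω, T ω)) ⁻¹' B, g (X ω, T ω) ∂μ
      = ∫ ω in (fun ω => (X ω, T ω)) ⁻¹' B, u (C ω, X ω, T ω) ∂μ := by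
        rw [setIntegral_preimage_prodMk_eq_sum hX hT hB hgi,
          setIntegral_preimage_prodMk_eq_sum (H := fun ω t => u (C ω, X ω, t)) hX hT hB hui]
        exact Finset.sum_congr rfl fun t _ => hterm t
    _ = ∫ ω in (fun ω => (X ω, T ω)) ⁻¹' B, μ[Y | MeasurableSpace.comap
          (fun ω => (C ω, X ω, T ω)) inferInstance] ω ∂μ :=
        setIntegral_congr_ae (hCXT.comap_le _ hB_CXT) (hYu.mono fun _ h _ => h)
    _ = ∫ ω in (fun ω => (X ω, T ω)) ⁻¹' B, Y ω ∂μ := setIntegral_condExp hCXT.comap_le hY hB_CXT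

end SharpDesign

lemma integrable_section_map_of_ae_eq {Ω 𝒞 𝒳 α : Type*} [MeasurableSpace Ω] [MeasurableSpace 𝒞]
    [MeasurableSpace 𝒳] [MeasurableSpace α] {μ : Measure Ω} {C : Ω → 𝒞} {X : Ω → 𝒳} {T : Ω → α}
    (hC : Measurable C) (hX : Measurable X) {u : 𝒞 × 𝒳 × α → ℝ} {t : α}
    (hu : Measurable fun p : 𝒞 × 𝒳 => u (p.1, p.2, t)) (hTt : ∀ᵐ ω ∂μ, T ω = t)
    (hi : Integrable (fun ω => u (C ω, X ω, T ω)) μ) :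
    Integrable (fun p : 𝒞 × 𝒳 => u (p.1, p.2, t)) (μ.map fun ω => (C ω, X ω)) :=
  (integrable_map_measure hu.aestronglyMeasurable (hC.prodMk hX).aemeasurable).mpr
    (hi.congr (hTt.mono fun ω h => by simp [h]))

theorem sharp_rdd_Y_indep_regime_given_XT_general
    {Ω 𝒞 : Type*} [MeasurableSpace Ω] [MeasurableSpace 𝒞]
    (C : Ω → 𝒞) (X : Ω → ℝ) (T : Ω → Fin 2) (Y : Ω → ℝ)
    (hC : Measurable C) (hX : Measurable X) (hT : Measurable T)
    (P₀ P₁ Ps : Measure Ω)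
    [IsProbabilityMeasure P₀] [IsProbabilityMeasure P₁] [IsProbabilityMeasure Ps]
    (hT0 : P₀ {ω | T ω = 0} = 1) (hT1 : P₁ {ω | T ω = 1} = 1)
    (hYint : ∀ P ∈ ({P₀, P₁, Ps} : Set (Measure Ω)), Integrable Y P)
    -- (4a): the joint law of (C, X) is the same in all three regimes
    (h4a : Measure.map (fun ω => (C ω, X ω)) P₀ = Measure.map (fun ω => (C ω, X ω)) P₁ ∧
           Measure.map (fun ω => (C ω, X ω)) P₀ = Measure.map (fun ω => (C ω, X ω)) Ps)
    -- (4b): a single measurable u(C, X, T) is a version of E_{P_σ}[Y | σ(C, X, T)] in all regimes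
    (u : 𝒞 × ℝ × Fin 2 → ℝ) (hu_meas : Measurable u)
    (h4b : ∀ P ∈ ({P₀, P₁, Ps} : Set (Measure Ω)),
      (fun ω => u (C ω, X ω, T ω)) =ᵐ[P]
        P[Y | MeasurableSpace.comap (fun ω => (C ω, X ω, T ω)) inferInstance])
    -- sharp condition: T ⫫ C | (X, Σ): in every regime, for every bounded measurable h on {0,1},
    -- E_{P_σ}[h(T) | σ(C, X)] = E_{P_σ}[h(T) | σ(X)] a.s. (every h : Fin 2 → ℝ is bounded measurable)
    (hsharp : ∀ P ∈ ({P₀, P₁, Ps} : Set (Measure Ω)), ∀ h : Fin 2 → ℝ,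
      P[(fun ω => h (T ω)) | MeasurableSpace.comap (fun ω => (C ω, X ω)) inferInstance]
        =ᵐ[P] P[(fun ω => h (T ω)) | MeasurableSpace.comap X inferInstance]) :
    ∃ g : ℝ × Fin 2 → ℝ, Measurable g ∧
      ∀ P ∈ ({P₀, P₁, Ps} : Set (Measure Ω)),
        (fun ω => g (X ω, T ω)) =ᵐ[P]
          P[Y | MeasurableSpace.comap (fun ω => (X ω, T ω)) inferInstance] := by
  set ν := P₀.map fun ω => (C ω, X ω)
  have hregime : ∀ P ∈ ({P₀, P₁, Ps} : Set (Measure Ω)),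
      IsProbabilityMeasure P ∧ P.map (fun ω => (C ω, X ω)) = ν := by
    rintro P (rfl | rfl | rfl)
    exacts [⟨inferInstance, rfl⟩, ⟨inferInstance, h4a.1.symm⟩, ⟨inferInstance, h4a.2.symm⟩]
  have hui : ∀ P ∈ ({P₀, P₁, Ps} : Set (Measure Ω)), Integrable (fun ω => u (C ω, X ω, T ω)) P :=
    fun P hP => integrable_condExp.congr (h4b P hP).symm
  have hsec : ∀ t, Measurable fun p : 𝒞 × ℝ => u (p.1, p.2, t) := fun t =>
    hu_meas.comp (measurable_fst.prodMk (measurable_snd.prodMk measurable_const))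
  have hsec_int : ∀ t : Fin 2, Integrable (fun p : 𝒞 × ℝ => u (p.1, p.2, t)) ν
    | 0 => integrable_section_map_of_ae_eq hC hX (hsec _)
        ((mem_ae_iff_prob_eq_one (hT (measurableSet_singleton 0))).mpr hT0) (hui P₀ (by simp))
    | 1 => h4a.1 ▸ integrable_section_map_of_ae_eq hC hX (hsec _)
        ((mem_ae_iff_prob_eq_one (hT (measurableSet_singleton 1))).mpr hT1) (hui P₁ (by simp))
  choose f hf hf_eq using fun t : Fin 2 => exists_measurable_comp_eq_condExp ν Prod.snd
    fun p : 𝒞 × ℝ => u (p.1, p.2, t)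
  have hg : Measurable fun p : ℝ × Fin 2 => f p.2 p.1 := measurable_from_prod_countable_left hf
  refine ⟨fun p => f p.2 p.1, hg, fun P hP => ?_⟩
  obtain ⟨hPprob, hPlaw⟩ := hregime P hP
  exact ae_eq_condExp_prodMk_of_treatment_condIndep hC hX hT (hYint P hP) (h4b P hP)
    (hsharp P hP) hsec (fun t => (hPlaw ▸ hsec_int t).comp_measurable (hC.prodMk hX)) hg
    fun t => comp_ae_eq_condExp_comp (hC.prodMk hX) hPlaw measurable_snd (hsec_int t) (hf t)
      (hf_eq t).symm.eventuallyEq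

/-- Theorem 4.4, sharp RDD: sufficient covariates plus the sharp-design
condition imply `Y ⫫ Σ | (X, T)`: a single measurable function `g` of `(X, T)` is
simultaneously a version of `E_{P_σ}[Y | σ(X, T)]` in every regime `σ ∈ {0, 1, s}`. -/
theorem sharp_rdd_Y_indep_regime_given_XT
    {Ω 𝒞 : Type*} [MeasurableSpace Ω] [MeasurableSpace 𝒞] [StandardBorelSpace 𝒞]
    (C : Ω → 𝒞) (X : Ω → ℝ) (T : Ω → Fin 2) (Y : Ω → ℝ)
    (hC : Measurable C) (hX : Measurable X) (hT : Measurable T) (hY : Measurable Y)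
    (P₀ P₁ Ps : Measure Ω)
    [IsProbabilityMeasure P₀] [IsProbabilityMeasure P₁] [IsProbabilityMeasure Ps]
    (hT0 : P₀ {ω | T ω = 0} = 1) (hT1 : P₁ {ω | T ω = 1} = 1)
    (hYint : ∀ P ∈ ({P₀, P₁, Ps} : Set (Measure Ω)), Integrable Y P)
    -- (4a): the joint law of (C, X) is the same in all three regimes
    (h4a : Measure.map (fun ω => (C ω, X ω)) P₀ = Measure.map (fun ω => (C ω, X ω)) P₁ ∧
           Measure.map (fun ω => (C ω, X ω)) P₀ = Measure.map (fun ω => (C ω, X ω)) Ps)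
    -- (4b): a single measurable u(C, X, T) is a version of E_{P_σ}[Y | σ(C, X, T)] in all regimes
    (u : 𝒞 × ℝ × Fin 2 → ℝ) (hu_meas : Measurable u)
    (h4b : ∀ P ∈ ({P₀, P₁, Ps} : Set (Measure Ω)),
      (fun ω => u (C ω, X ω, T ω)) =ᵐ[P]
        P[Y | MeasurableSpace.comap (fun ω => (C ω, X ω, T ω)) inferInstance])
    -- sharp condition: T ⫫ C | (X, Σ): in every regime, for every bounded measurable h on {0,1},
    -- E_{P_σ}[h(T) | σ(C, X)] = E_{P_σ}[h(T) | σ(X)] a.s. (every h : Fin 2 → ℝ is bounded measurable)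
    (hsharp : ∀ P ∈ ({P₀, P₁, Ps} : Set (Measure Ω)), ∀ h : Fin 2 → ℝ,
      P[(fun ω => h (T ω)) | MeasurableSpace.comap (fun ω => (C ω, X ω)) inferInstance]
        =ᵐ[P] P[(fun ω => h (T ω)) | MeasurableSpace.comap X inferInstance]) :
    ∃ g : ℝ × Fin 2 → ℝ, Measurable g ∧
      ∀ P ∈ ({P₀, P₁, Ps} : Set (Measure Ω)),
        (fun ω => g (X ω, T ω)) =ᵐ[P]
          P[Y | MeasurableSpace.comap (fun ω => (X ω, T ω)) inferInstance] :=
  sharp_rdd_Y_indep_regime_given_XT_general C X T Y hC hX hT P₀ P₁ Ps hT0 hT1 hYint h4a u hu_meas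
    h4b hsharp
end

section
/- Let C, X, T, Y be random variables on a measurable space (Ω, 𝓕) with C valued in a standard Borel space, X in ℝ, T in {0,1}, Y in ℝ, and let P₀, P₁, Pₛ be probability measures with P₀(T=0)=1, P₁(T=1)=1, Y integrable under each, and let x₀ ∈ ℝ. Assume the sharp design adherence condition Pₛ(T = 1_{X ≥ x₀}) = 1. Let g : ℝ×{0,1} → ℝ be measurable such that g(X, T) is a version of E_{P_σ}[Y | σ(X, T)] simultaneously for every σ ∈ {0, 1, s}, and define m(x) := g(x, 1_{x ≥ x₀}). Then m(X) is a version of E_{Pₛ}[Y | σ(X)], and if g(x₀+ε, 1) → g(x₀, 1) and g(x₀−ε, 0) → g(x₀, 0) as ε ↓ 0, then the average causal effect at the threshold, ACE_{x₀} := g(x₀, 1) − g(x₀, 0), satisfies ACE_{x₀} = lim_{ε↓0} [m(x₀+ε) − m(x₀−ε)], i.e. ACE_{x₀} is identified as the limit of the difference of observational regressions of Y on X on either side of the threshold. -/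
open MeasureTheory Filter Topology

/-! Under sharp adherence `T = 1_{X ≥ x₀}` holds `Pₛ`-a.s., so `g(X, T) = m(X)` `Pₛ`-a.s.; hence the
version `g(X, T)` of `E_{Pₛ}[Y | σ(X, T)]` is `σ(X)`-measurable, and the tower property makes it a
version of `E_{Pₛ}[Y | σ(X)]` as well. For the limit, `m(x₀ + ε) = g(x₀ + ε, 1)` and
`m(x₀ - ε) = g(x₀ - ε, 0)` for every `ε > 0`, so the one-sided continuity of `g` gives the jump. -/

theorem ae_eq_condExp_of_ae_eq_condExp_of_le {Ω E : Type*} [NormedAddCommGroup E]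
    [NormedSpace ℝ E] [CompleteSpace E] {m₁ m₂ m₀ : MeasurableSpace Ω} {μ : Measure Ω}
    {f h : Ω → E} (h₁₂ : m₁ ≤ m₂) (h₂ : m₂ ≤ m₀) [SigmaFinite (μ.trim (h₁₂.trans h₂))]
    (hh : StronglyMeasurable[m₁] h) (hf : h =ᵐ[μ] μ[f | m₂]) : h =ᵐ[μ] μ[f | m₁] := by
  have : SigmaFinite (μ.trim h₂) := sigmaFiniteTrim_mono h₂ h₁₂
  have hint : Integrable h μ := integrable_condExp.congr hf.symm
  calc h = μ[h | m₁] := (condExp_of_stronglyMeasurable (h₁₂.trans h₂) hh hint).symm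
    _ =ᵐ[μ] μ[μ[f | m₂] | m₁] := condExp_congr_ae hf
    _ =ᵐ[μ] μ[f | m₁] := condExp_condExp_of_le h₁₂ h₂

theorem MeasurableSpace.comap_le_comap_prodMk {Ω α β : Type*} [MeasurableSpace α]
    [MeasurableSpace β] (X : Ω → α) (T : Ω → β) :
    MeasurableSpace.comap X inferInstance ≤
      MeasurableSpace.comap (fun ω => (X ω, T ω)) inferInstance := by
  rw [show X = Prod.fst ∘ fun ω => (X ω, T ω) from rfl, ← MeasurableSpace.comap_comp]
  exact MeasurableSpace.comap_mono measurable_fst.comap_le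

theorem measurable_prodMk_threshold (x₀ : ℝ) :
    Measurable fun x : ℝ => (x, if x₀ ≤ x then (1 : Fin 2) else 0) :=
  measurable_id.prodMk
    (Measurable.ite measurableSet_Ici measurable_const measurable_const)

theorem tendsto_threshold_jump {E : Type*} [TopologicalSpace E] [AddGroup E]
    [IsTopologicalAddGroup E] {g : ℝ × Fin 2 → E} {x₀ : ℝ}
    (h₁ : Tendsto (fun ε => g (x₀ + ε, 1)) (𝓝[>] 0) (𝓝 (g (x₀, 1))))
    (h₀ : Tendsto (fun ε => g (x₀ - ε, 0)) (𝓝[>] 0) (𝓝 (g (x₀, 0)))) :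
    Tendsto (fun ε => g (x₀ + ε, if x₀ ≤ x₀ + ε then 1 else 0) -
        g (x₀ - ε, if x₀ ≤ x₀ - ε then 1 else 0)) (𝓝[>] 0)
      (𝓝 (g (x₀, 1) - g (x₀, 0))) := by
  refine (h₁.sub h₀).congr' ?_
  filter_upwards [self_mem_nhdsWithin] with ε (hε : 0 < ε)
  rw [if_pos (by linarith), if_neg (by linarith)]

theorem sharp_rdd_ACE_identification_threshold_indicator_general
    {Ω : Type*} [MeasurableSpace Ω]
    (X : Ω → ℝ) (T : Ω → Fin 2) (Y : Ω → ℝ)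
    (hX : Measurable X) (hT : Measurable T)
    (P₀ P₁ Ps : Measure Ω)
    [IsProbabilityMeasure Ps]
    (x₀ : ℝ)
    -- sharp design adherence: Pₛ(T = 1_{X ≥ x₀}) = 1
    (hadh : Ps {ω | T ω = if x₀ ≤ X ω then (1 : Fin 2) else 0} = 1)
    (g : ℝ × Fin 2 → ℝ) (hg_meas : Measurable g)
    (hg : ∀ P ∈ ({P₀, P₁, Ps} : Set (Measure Ω)),
      (fun ω => g (X ω, T ω)) =ᵐ[P]
        P[Y | MeasurableSpace.comap (fun ω => (X ω, T ω)) inferInstance])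
    -- m(x) := g(x, 1_{x ≥ x₀})
    (m : ℝ → ℝ) (hm : ∀ x, m x = g (x, if x₀ ≤ x then 1 else 0)) :
    -- m(X) is a version of the observational regression E_{Pₛ}[Y | σ(X)]
    ((fun ω => m (X ω)) =ᵐ[Ps] Ps[Y | MeasurableSpace.comap X inferInstance]) ∧
    -- and under one-sided continuity at x₀, ACE_{x₀} is identified from Pₛ
    ((Tendsto (fun ε => g (x₀ + ε, 1)) (𝓝[>] (0 : ℝ)) (𝓝 (g (x₀, 1))) ∧
      Tendsto (fun ε => g (x₀ - ε, 0)) (𝓝[>] (0 : ℝ)) (𝓝 (g (x₀, 0)))) →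
      Tendsto (fun ε => m (x₀ + ε) - m (x₀ - ε)) (𝓝[>] (0 : ℝ))
        (𝓝 (g (x₀, 1) - g (x₀, 0)))) := by
  obtain rfl : m = fun x => g (x, if x₀ ≤ x then 1 else 0) := funext hm
  have hadh_ae : ∀ᵐ ω ∂Ps, T ω = if x₀ ≤ X ω then (1 : Fin 2) else 0 :=
    (mem_ae_iff_prob_eq_one (measurableSet_eq_fun hT
      ((measurable_prodMk_threshold x₀).snd.comp hX))).2 hadh
  have hgm : (fun ω => g (X ω, if x₀ ≤ X ω then 1 else 0)) =ᵐ[Ps]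
      Ps[Y | MeasurableSpace.comap (fun ω => (X ω, T ω)) inferInstance] := by
    refine EventuallyEq.trans ?_ (hg Ps (by simp))
    filter_upwards [hadh_ae] with ω hω
    rw [hω]
  have hmX : StronglyMeasurable[MeasurableSpace.comap X inferInstance]
      fun ω => g (X ω, if x₀ ≤ X ω then 1 else 0) :=
    (hg_meas.comp ((measurable_prodMk_threshold x₀).comp (comap_measurable X))).stronglyMeasurable
  exact ⟨ae_eq_condExp_of_ae_eq_condExp_of_le (MeasurableSpace.comap_le_comap_prodMk X T)
      (hX.prodMk hT).comap_le hmX hgm,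
    fun ⟨h₁, h₀⟩ => tendsto_threshold_jump h₁ h₀⟩

/-- Theorem 4.7, sharp RDD: under the sharp adherence condition
`Pₛ(T = 1_{X ≥ x₀}) = 1`, if `g(X, T)` is simultaneously a version of `E_{P_σ}[Y | σ(X, T)]`
in all regimes and `m(x) := g(x, 1_{x ≥ x₀})`, then `m(X)` is a version of `E_{Pₛ}[Y | σ(X)]`,
and under one-sided continuity of `g` at `x₀`,
`ACE_{x₀} = g(x₀, 1) − g(x₀, 0) = lim_{ε↓0} [m(x₀+ε) − m(x₀−ε)]`. -/
theorem sharp_rdd_ACE_identification_threshold_indicator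
    {Ω 𝒞 : Type*} [MeasurableSpace Ω] [MeasurableSpace 𝒞] [StandardBorelSpace 𝒞]
    (C : Ω → 𝒞) (X : Ω → ℝ) (T : Ω → Fin 2) (Y : Ω → ℝ)
    (hC : Measurable C) (hX : Measurable X) (hT : Measurable T) (hY : Measurable Y)
    (P₀ P₁ Ps : Measure Ω)
    [IsProbabilityMeasure P₀] [IsProbabilityMeasure P₁] [IsProbabilityMeasure Ps]
    (hT0 : P₀ {ω | T ω = 0} = 1) (hT1 : P₁ {ω | T ω = 1} = 1)
    (hYint : ∀ P ∈ ({P₀, P₁, Ps} : Set (Measure Ω)), Integrable Y P)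
    (x₀ : ℝ)
    -- sharp design adherence: Pₛ(T = 1_{X ≥ x₀}) = 1
    (hadh : Ps {ω | T ω = if x₀ ≤ X ω then (1 : Fin 2) else 0} = 1)
    (g : ℝ × Fin 2 → ℝ) (hg_meas : Measurable g)
    (hg : ∀ P ∈ ({P₀, P₁, Ps} : Set (Measure Ω)),
      (fun ω => g (X ω, T ω)) =ᵐ[P]
        P[Y | MeasurableSpace.comap (fun ω => (X ω, T ω)) inferInstance])
    -- m(x) := g(x, 1_{x ≥ x₀})
    (m : ℝ → ℝ) (hm : ∀ x, m x = g (x, if x₀ ≤ x then 1 else 0)) :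
    -- m(X) is a version of the observational regression E_{Pₛ}[Y | σ(X)]
    ((fun ω => m (X ω)) =ᵐ[Ps] Ps[Y | MeasurableSpace.comap X inferInstance]) ∧
    -- and under one-sided continuity at x₀, ACE_{x₀} is identified from Pₛ
    ((Tendsto (fun ε => g (x₀ + ε, 1)) (𝓝[>] (0 : ℝ)) (𝓝 (g (x₀, 1))) ∧
      Tendsto (fun ε => g (x₀ - ε, 0)) (𝓝[>] (0 : ℝ)) (𝓝 (g (x₀, 0)))) →
      Tendsto (fun ε => m (x₀ + ε) - m (x₀ - ε)) (𝓝[>] (0 : ℝ))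
        (𝓝 (g (x₀, 1) - g (x₀, 0)))) :=
  sharp_rdd_ACE_identification_threshold_indicator_general X T Y hX hT P₀ P₁ Ps x₀ hadh g hg_meas hg
    m hm
end

section
/- Let C, X, T, Y be random variables on a measurable space (Ω, 𝓕) with C valued in a standard Borel space 𝒞, X in ℝ, T in {0,1}, Y in ℝ, and let P₀, P₁, P_f be probability measures with P₀(T=0)=1, P₁(T=1)=1 and Y integrable under each. Assume: (4a) the joint law of (C, X) is the same under P₀, P₁ and P_f; (4b) there exists a measurable u : 𝒞×ℝ×{0,1} → ℝ such that u(C, X, T) is a version of E_{P_σ}[Y | σ(C, X, T)] simultaneously for every σ ∈ {0, 1, f}; (positivity) there is a measurable p : 𝒞×ℝ → [0,1] such that p(C, X) is a version of E_{P_f}[1_{T=1} | σ(C, X)] and 0 < p(C, X) < 1 P_f-almost surely. Then for each t ∈ {0, 1}: for every measurable m_t : 𝒞×ℝ → ℝ such that m_t(C, X) is a version of E_{P_t}[Y | σ(C, X)], and every measurable k : 𝒞×ℝ×{0,1} → ℝ such that k(C, X, T) is a version of E_{P_f}[Y | σ(C, X, T)], one has m_t(C, X) = k(C, X, t) almost surely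 under P_f (and likewise almost surely under P₀ and under P₁). -/
open MeasureTheory

/-!
Under an intervention `P_t` the treatment is a.s. equal to `t`, so the common regression
`u(C, X, T)` of (4b) collapses to the `σ(C, X)`-measurable `u(C, X, t)`, and by the tower property
this is `E_{P_t}[Y | σ(C, X)]`. Under `P_f` the observational regression `k(C, X, T)` agrees with
`u(C, X, T)`, hence `k(C, X, t) = u(C, X, t)` on `{T = t}`; since `P_f(T = t | C, X) > 0`, a
`σ(C, X)`-event missing `{T = t}` up to a null set is itself null, so the equality holds `P_f`-a.s.
Both equalities are between functions of `(C, X)`, whose law is the same in all regimes (4a).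
-/

theorem MeasurableSpace.comap_comp_le {Ω β γ : Type*} {mβ : MeasurableSpace β}
    [mγ : MeasurableSpace γ] {g : Ω → β} {φ : β → γ} (hφ : Measurable φ) :
    mγ.comap (φ ∘ g) ≤ mβ.comap g := by
  rw [← MeasurableSpace.comap_comp]
  exact MeasurableSpace.comap_mono hφ.comap_le

namespace MeasureTheory

variable {Ω β : Type*} {m m' m0 : MeasurableSpace Ω} [MeasurableSpace β]

theorem ae_eq_comp_of_map_eq {γ : Type*} [MeasurableSpace γ] [MeasurableEq γ]
    {μ ν : Measure Ω} {f : Ω → β} (hf : Measurable f) (hmap : μ.map f = ν.map f)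
    {g h : β → γ} (hg : Measurable g) (hh : Measurable h) (hgh : g ∘ f =ᵐ[μ] h ∘ f) :
    g ∘ f =ᵐ[ν] h ∘ f := by
  refine ae_eq_comp hf.aemeasurable ?_
  rw [← hmap]
  exact (ae_map_iff hf.aemeasurable (measurableSet_eq_fun hg hh)).mpr hgh

theorem condExp_ae_eq_of_condExp_ae_eq_of_le {μ : Measure Ω} [IsFiniteMeasure μ]
    (hmm' : m ≤ m') (hm' : m' ≤ m0) {f g : Ω → ℝ} (hg : StronglyMeasurable[m] g)
    (hfg : μ[f | m'] =ᵐ[μ] g) : μ[f | m] =ᵐ[μ] g :=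
  calc μ[f | m] =ᵐ[μ] μ[μ[f | m'] | m] := (condExp_condExp_of_le hmm' hm').symm
    _ =ᵐ[μ] μ[g | m] := condExp_congr_ae hfg
    _ = g := condExp_of_stronglyMeasurable (hmm'.trans hm') hg (integrable_condExp.congr hfg)

theorem condExp_indicator_compl_ae_eq {μ : Measure Ω} [IsFiniteMeasure μ] (hm : m ≤ m0)
    {s : Set Ω} (hs : MeasurableSet s) :
    μ[sᶜ.indicator (1 : Ω → ℝ) | m] =ᵐ[μ] 1 - μ[s.indicator 1 | m] := by
  rw [Set.indicator_compl]
  filter_upwards [condExp_sub (integrable_const (1 : ℝ)) ((integrable_const 1).indicator hs) m]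
    with ω hω
  rw [condExp_const hm] at hω
  exact hω

theorem measure_eq_zero_of_condExp_indicator_pos {μ : Measure Ω} [IsFiniteMeasure μ]
    (hm : m ≤ m0) {s S : Set Ω} (hs : MeasurableSet s) (hS : MeasurableSet[m] S)
    (hpos : ∀ᵐ ω ∂μ, 0 < μ[s.indicator (1 : Ω → ℝ) | m] ω) (hnull : μ (s ∩ S) = 0) :
    μ S = 0 := by
  have hint : ∫ ω in S, μ[s.indicator (1 : Ω → ℝ) | m] ω ∂μ = 0 := by
    rw [setIntegral_condExp hm ((integrable_const 1).indicator hs) hS, integral_indicator_one hs,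
      measureReal_restrict_apply hs, measureReal_def, hnull, ENNReal.toReal_zero]
  have hzero : μ[s.indicator (1 : Ω → ℝ) | m] =ᵐ[μ.restrict S] 0 :=
    (setIntegral_eq_zero_iff_of_nonneg_ae (ae_restrict_of_ae (hpos.mono fun _ h => h.le))
      integrable_condExp.integrableOn).mp hint
  have hfalse : ∀ᵐ ω ∂μ.restrict S, False := by
    filter_upwards [hzero, ae_restrict_of_ae hpos] with ω h0 hp
    exact (h0 ▸ hp).false
  simpa using ae_iff.mp hfalse

end MeasureTheory

theorem condExp_indicator_treatment_pos {Ω : Type*} {m m0 : MeasurableSpace Ω} {P : Measure Ω}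
    [IsFiniteMeasure P] (hm : m ≤ m0) {T : Ω → Fin 2} (hT : Measurable[m0] T) {p : Ω → ℝ}
    (hp_ver : p =ᵐ[P] P[fun ω => if T ω = 1 then (1 : ℝ) else 0 | m])
    (hp_pos : ∀ᵐ ω ∂P, 0 < p ω ∧ p ω < 1) (t : Fin 2) :
    ∀ᵐ ω ∂P, 0 < P[{ω | T ω = t}.indicator (1 : Ω → ℝ) | m] ω := by
  have hind : (fun ω => if T ω = 1 then (1 : ℝ) else 0) = {ω | T ω = 1}.indicator 1 := by
    ext ω
    simp [Set.indicator]
  rw [hind] at hp_ver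
  obtain rfl | rfl : t = 0 ∨ t = 1 := by omega
  · have hcompl : {ω | T ω = 0} = {ω | T ω = 1}ᶜ := by
      ext ω
      simp only [Set.mem_ofPred_eq, Set.mem_compl_iff]
      omega
    filter_upwards [condExp_indicator_compl_ae_eq (s := {ω | T ω = 1}) hm
      (hT (measurableSet_singleton 1)), hp_ver, hp_pos] with ω hc hv hω
    rw [hcompl, hc, Pi.sub_apply, ← hv]
    simp only [Pi.one_apply]
    linarith [hω.2]
  · filter_upwards [hp_ver, hp_pos] with ω hv hω
    rw [← hv]
    exact hω.1

section Covariates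

variable {Ω 𝒞 𝒳 τ : Type*} [MeasurableSpace Ω] [MeasurableSpace 𝒞] [MeasurableSpace 𝒳]
  [MeasurableSpace τ] {C : Ω → 𝒞} {X : Ω → 𝒳} {T : Ω → τ}

theorem condExp_covariates_ae_eq_of_ae_treatment_eq (hC : Measurable C) (hX : Measurable X)
    (hT : Measurable T) {P : Measure Ω} [IsFiniteMeasure P] {Y : Ω → ℝ}
    {u : 𝒞 × 𝒳 × τ → ℝ} (hu : Measurable u) {t : τ} (hTt : ∀ᵐ ω ∂P, T ω = t)
    (hu_ver : (fun ω => u (C ω, X ω, T ω)) =ᵐ[P]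
      P[Y | MeasurableSpace.comap (fun ω => (C ω, X ω, T ω)) inferInstance]) :
    P[Y | MeasurableSpace.comap (fun ω => (C ω, X ω)) inferInstance] =ᵐ[P]
      fun ω => u (C ω, X ω, t) := by
  refine condExp_ae_eq_of_condExp_ae_eq_of_le
    (MeasurableSpace.comap_comp_le (φ := fun z : 𝒞 × 𝒳 × τ => (z.1, z.2.1))
      (measurable_fst.prodMk (measurable_fst.comp measurable_snd)))
    (hC.prodMk (hX.prodMk hT)).comap_le ?_ ?_
  · exact ((hu.comp (measurable_fst.prodMk (measurable_snd.prodMk measurable_const))).comp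
      (comap_measurable _)).stronglyMeasurable
  · exact hu_ver.symm.trans (hTt.mono fun ω h => congrArg (fun s => u (C ω, X ω, s)) h)

theorem ae_eq_at_treatment_of_ae_eq_of_condExp_indicator_pos [MeasurableSingletonClass τ]
    (hC : Measurable C) (hX : Measurable X) (hT : Measurable T) {P : Measure Ω}
    [IsFiniteMeasure P] {k u : 𝒞 × 𝒳 × τ → ℝ} (hk : Measurable k) (hu : Measurable u) {t : τ}
    (hku : (fun ω => k (C ω, X ω, T ω)) =ᵐ[P] fun ω => u (C ω, X ω, T ω))
    (hpos : ∀ᵐ ω ∂P, 0 < P[{ω | T ω = t}.indicator (1 : Ω → ℝ) |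
      MeasurableSpace.comap (fun ω => (C ω, X ω)) inferInstance] ω) :
    (fun ω => k (C ω, X ω, t)) =ᵐ[P] fun ω => u (C ω, X ω, t) := by
  have hπ : Measurable fun z : 𝒞 × 𝒳 => (z.1, z.2, t) :=
    measurable_fst.prodMk (measurable_snd.prodMk measurable_const)
  have hA : MeasurableSet {z : 𝒞 × 𝒳 | k (z.1, z.2, t) ≠ u (z.1, z.2, t)} :=
    (measurableSet_eq_fun (hk.comp hπ) (hu.comp hπ)).compl
  refine ae_iff.mpr (measure_eq_zero_of_condExp_indicator_pos (hC.prodMk hX).comap_le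
    (hT (measurableSet_singleton t)) ⟨_, hA, rfl⟩ hpos (measure_mono_null ?_ (ae_iff.mp hku)))
  rintro ω ⟨hTω, hne⟩
  simp only [Set.mem_ofPred_eq] at hTω ⊢
  rwa [hTω]

end Covariates

theorem fuzzy_rdd_interventional_regression_eq_observational_general
    {Ω 𝒞 : Type*} [MeasurableSpace Ω] [MeasurableSpace 𝒞]
    (C : Ω → 𝒞) (X : Ω → ℝ) (T : Ω → Fin 2) (Y : Ω → ℝ)
    (hC : Measurable C) (hX : Measurable X) (hT : Measurable T)
    (P₀ P₁ Pf : Measure Ω)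
    [IsProbabilityMeasure P₀] [IsProbabilityMeasure P₁] [IsProbabilityMeasure Pf]
    (hT0 : P₀ {ω | T ω = 0} = 1) (hT1 : P₁ {ω | T ω = 1} = 1)
    -- (4a): the joint law of (C, X) is the same in all three regimes
    (h4a : Measure.map (fun ω => (C ω, X ω)) P₀ = Measure.map (fun ω => (C ω, X ω)) P₁ ∧
           Measure.map (fun ω => (C ω, X ω)) P₀ = Measure.map (fun ω => (C ω, X ω)) Pf)
    -- (4b): a single measurable u(C, X, T) is a version of E_{P_σ}[Y | σ(C, X, T)] in all regimes
    (u : 𝒞 × ℝ × Fin 2 → ℝ) (hu_meas : Measurable u)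
    (h4b : ∀ P ∈ ({P₀, P₁, Pf} : Set (Measure Ω)),
      (fun ω => u (C ω, X ω, T ω)) =ᵐ[P]
        P[Y | MeasurableSpace.comap (fun ω => (C ω, X ω, T ω)) inferInstance])
    -- positivity: p(C, X) is a version of E_{P_f}[1_{T=1} | σ(C, X)] with 0 < p(C, X) < 1 a.s.
    (p : 𝒞 × ℝ → ℝ)
    (hp_ver : (fun ω => p (C ω, X ω)) =ᵐ[Pf]
      Pf[(fun ω => if T ω = 1 then (1 : ℝ) else 0) |
        MeasurableSpace.comap (fun ω => (C ω, X ω)) inferInstance])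
    (hp_pos : ∀ᵐ ω ∂Pf, 0 < p (C ω, X ω) ∧ p (C ω, X ω) < 1) :
    ∀ t : Fin 2, ∀ mt : 𝒞 × ℝ → ℝ, Measurable mt →
      ((fun ω => mt (C ω, X ω)) =ᵐ[if t = 0 then P₀ else P₁]
        (if t = 0 then P₀ else P₁)[Y | MeasurableSpace.comap (fun ω => (C ω, X ω)) inferInstance]) →
      ∀ k : 𝒞 × ℝ × Fin 2 → ℝ, Measurable k →
        ((fun ω => k (C ω, X ω, T ω)) =ᵐ[Pf]
          Pf[Y | MeasurableSpace.comap (fun ω => (C ω, X ω, T ω)) inferInstance]) →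
        ∀ P ∈ ({P₀, P₁, Pf} : Set (Measure Ω)),
          (fun ω => mt (C ω, X ω)) =ᵐ[P] (fun ω => k (C ω, X ω, t)) := by
  intro t mt hmt_meas hmt k hk_meas hk P hP
  have hCX : Measurable fun ω => (C ω, X ω) := hC.prodMk hX
  have hπ : Measurable fun z : 𝒞 × ℝ => (z.1, z.2, t) :=
    measurable_fst.prodMk (measurable_snd.prodMk measurable_const)
  have hlaw : ∀ Q ∈ ({P₀, P₁, Pf} : Set (Measure Ω)),
      Q.map (fun ω => (C ω, X ω)) = P₀.map (fun ω => (C ω, X ω)) := by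
    rintro Q (rfl | rfl | rfl)
    exacts [rfl, h4a.1.symm, h4a.2.symm]
  obtain ⟨_, hPt_mem, hTt⟩ : IsProbabilityMeasure (if t = 0 then P₀ else P₁) ∧
      (if t = 0 then P₀ else P₁) ∈ ({P₀, P₁, Pf} : Set (Measure Ω)) ∧
      ∀ᵐ ω ∂(if t = 0 then P₀ else P₁), T ω = t := by
    obtain rfl | rfl : t = 0 ∨ t = 1 := by omega
    · rw [if_pos rfl]
      exact ⟨inferInstance, by simp,
        (mem_ae_iff_prob_eq_one (s := {ω | T ω = 0}) (hT (measurableSet_singleton 0))).mpr hT0⟩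
    · rw [if_neg (by decide)]
      exact ⟨inferInstance, by simp,
        (mem_ae_iff_prob_eq_one (s := {ω | T ω = 1}) (hT (measurableSet_singleton 1))).mpr hT1⟩
  have hmt_u : (fun ω => mt (C ω, X ω)) =ᵐ[if t = 0 then P₀ else P₁]
      fun ω => u (C ω, X ω, t) :=
    hmt.trans (condExp_covariates_ae_eq_of_ae_treatment_eq hC hX hT hu_meas hTt (h4b _ hPt_mem))
  have hk_u : (fun ω => k (C ω, X ω, t)) =ᵐ[Pf] fun ω => u (C ω, X ω, t) :=
    ae_eq_at_treatment_of_ae_eq_of_condExp_indicator_pos hC hX hT hk_meas hu_meas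
      (hk.trans (h4b Pf (by simp)).symm)
      (condExp_indicator_treatment_pos hCX.comap_le hT hp_ver hp_pos t)
  exact (ae_eq_comp_of_map_eq hCX ((hlaw _ hPt_mem).trans (hlaw P hP).symm) hmt_meas
      (hu_meas.comp hπ) hmt_u).trans
    (ae_eq_comp_of_map_eq hCX ((hlaw Pf (by simp)).trans (hlaw P hP).symm) (hk_meas.comp hπ)
      (hu_meas.comp hπ) hk_u).symm

/-- Theorem 4.10, fuzzy RDD: if `(C, X)` are strongly sufficient covariates,
then for each `t ∈ {0, 1}`, any version `m_t(C, X)` of `E_{P_t}[Y | σ(C, X)]` and any version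
`k(C, X, T)` of `E_{P_f}[Y | σ(C, X, T)]` satisfy `m_t(C, X) = k(C, X, t)` almost surely in
every regime (in particular under `P_f`). -/
theorem fuzzy_rdd_interventional_regression_eq_observational
    {Ω 𝒞 : Type*} [MeasurableSpace Ω] [MeasurableSpace 𝒞] [StandardBorelSpace 𝒞]
    (C : Ω → 𝒞) (X : Ω → ℝ) (T : Ω → Fin 2) (Y : Ω → ℝ)
    (hC : Measurable C) (hX : Measurable X) (hT : Measurable T) (hY : Measurable Y)
    (P₀ P₁ Pf : Measure Ω)
    [IsProbabilityMeasure P₀] [IsProbabilityMeasure P₁] [IsProbabilityMeasure Pf]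
    (hT0 : P₀ {ω | T ω = 0} = 1) (hT1 : P₁ {ω | T ω = 1} = 1)
    (hYint : ∀ P ∈ ({P₀, P₁, Pf} : Set (Measure Ω)), Integrable Y P)
    -- (4a): the joint law of (C, X) is the same in all three regimes
    (h4a : Measure.map (fun ω => (C ω, X ω)) P₀ = Measure.map (fun ω => (C ω, X ω)) P₁ ∧
           Measure.map (fun ω => (C ω, X ω)) P₀ = Measure.map (fun ω => (C ω, X ω)) Pf)
    -- (4b): a single measurable u(C, X, T) is a version of E_{P_σ}[Y | σ(C, X, T)] in all regimes
    (u : 𝒞 × ℝ × Fin 2 → ℝ) (hu_meas : Measurable u)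
    (h4b : ∀ P ∈ ({P₀, P₁, Pf} : Set (Measure Ω)),
      (fun ω => u (C ω, X ω, T ω)) =ᵐ[P]
        P[Y | MeasurableSpace.comap (fun ω => (C ω, X ω, T ω)) inferInstance])
    -- positivity: p(C, X) is a version of E_{P_f}[1_{T=1} | σ(C, X)] with 0 < p(C, X) < 1 a.s.
    (p : 𝒞 × ℝ → ℝ) (hp_meas : Measurable p) (hp_range : ∀ z, p z ∈ Set.Icc (0 : ℝ) 1)
    (hp_ver : (fun ω => p (C ω, X ω)) =ᵐ[Pf]
      Pf[(fun ω => if T ω = 1 then (1 : ℝ) else 0) |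
        MeasurableSpace.comap (fun ω => (C ω, X ω)) inferInstance])
    (hp_pos : ∀ᵐ ω ∂Pf, 0 < p (C ω, X ω) ∧ p (C ω, X ω) < 1) :
    ∀ t : Fin 2, ∀ mt : 𝒞 × ℝ → ℝ, Measurable mt →
      ((fun ω => mt (C ω, X ω)) =ᵐ[if t = 0 then P₀ else P₁]
        (if t = 0 then P₀ else P₁)[Y | MeasurableSpace.comap (fun ω => (C ω, X ω)) inferInstance]) →
      ∀ k : 𝒞 × ℝ × Fin 2 → ℝ, Measurable k →
        ((fun ω => k (C ω, X ω, T ω)) =ᵐ[Pf]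
          Pf[Y | MeasurableSpace.comap (fun ω => (C ω, X ω, T ω)) inferInstance]) →
        ∀ P ∈ ({P₀, P₁, Pf} : Set (Measure Ω)),
          (fun ω => mt (C ω, X ω)) =ᵐ[P] (fun ω => k (C ω, X ω, t)) :=
  fuzzy_rdd_interventional_regression_eq_observational_general C X T Y hC hX hT P₀ P₁ Pf hT0 hT1 h4a
    u hu_meas h4b p hp_ver hp_pos
end

section
/- Let C, X, T, Y be random variables on a measurable space (Ω, 𝓕) with C valued in a standard Borel space 𝒞, X in ℝ, T in {0,1}, Y in ℝ, and let P₀, P₁, P_f be probability measures with P₀(T=0)=1, P₁(T=1)=1, Y integrable under each, and suppose (C, X) are strongly sufficient covariates: the joint law of (C, X) is the same under P₀, P₁, P_f; some measurable u(C, X, T) is simultaneously a version of E_{P_σ}[Y | σ(C, X, T)] for all σ ∈ {0, 1, f}; and P_f(T = t | C, X) > 0 a.s. for t = 0, 1. Let k : 𝒞×ℝ×{0,1} → ℝ be measurable with k(C, X, T) a version of E_{P_f}[Y | σ(C, X, T)], for t ∈ {0,1} let m_t : ℝ → ℝ be measurable with m_t(X) a version of E_{P_t}[Y | σ(X)], and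 let r : ℝ → ℝ be measurable with r(X) a version of E_{P_f}[k(C, X, 1) − k(C, X, 0) | σ(X)]. Then m₁(X) − m₀(X) = r(X) almost surely under P_f; that is, the average causal effect function x ↦ E₁(Y | X = x) − E₀(Y | X = x) is identified, P_f-almost everywhere in X, as the observational regression of k(C, X, 1) − k(C, X, 0) on X under P_f. -/
/-!
Under the intervention `P_t` the treatment is the constant `t`, so by the tower property
`E_t[Y | X] = E_t[u(C, X, t) | X]`, and since `(C, X)` has the same law in every regime this
conditional expectation may be computed under `P_f` instead. It remains to replace `u` by `k`:
both are versions of `E_f[Y | C, X, T]`, so they agree `P_f`-a.s. on `{T = t}`, and as the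
disagreement set `{k(C, X, t) ≠ u(C, X, t)}` is `σ(C, X)`-measurable, positivity of
`P_f(T = t | C, X)` forces it to be null.
-/

open MeasureTheory ProbabilityTheory

section ConditionalProbability

variable {Ω : Type*} {m m₀ : MeasurableSpace Ω} {μ : Measure Ω}

theorem measure_eq_zero_of_setIntegral_eq_zero_of_condExp_pos [IsFiniteMeasure μ]
    (hm : m ≤ m₀) {f : Ω → ℝ} (hf : Integrable f μ) (hpos : ∀ᵐ ω ∂μ, 0 < μ[f | m] ω)
    {s : Set Ω} (hs : MeasurableSet[m] s) (h : ∫ ω in s, f ω ∂μ = 0) : μ s = 0 := by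
  have hzero : μ[f | m] =ᵐ[μ.restrict s] 0 := by
    refine (integral_eq_zero_iff_of_nonneg_ae (ae_restrict_of_ae (hpos.mono fun _ h => h.le))
      integrable_condExp.integrableOn).1 ?_
    rw [setIntegral_condExp hm hf hs, h]
  have hfalse : ∀ᵐ ω ∂μ.restrict s, False :=
    (hzero.and (ae_restrict_of_ae hpos)).mono fun ω ⟨h0, hp⟩ => (h0 ▸ hp).false
  rwa [Filter.eventually_false_iff_eq_bot, ae_eq_bot, Measure.restrict_eq_zero] at hfalse

theorem ae_eq_of_ae_eq_on_of_condExp_indicator_pos [IsFiniteMeasure μ] (hm : m ≤ m₀)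
    {f g : Ω → ℝ} (hf : Measurable[m] f) (hg : Measurable[m] g) {E : Set Ω}
    (hE : MeasurableSet E) (hfg : ∀ᵐ ω ∂μ, ω ∈ E → f ω = g ω)
    (hpos : ∀ᵐ ω ∂μ, 0 < μ[E.indicator (1 : Ω → ℝ) | m] ω) : f =ᵐ[μ] g := by
  have hne : MeasurableSet[m] {ω | f ω ≠ g ω} := (measurableSet_eq_fun hf hg).compl
  have hnull : μ ({ω | f ω ≠ g ω} ∩ E) = 0 :=
    measure_eq_zero_iff_ae_notMem.2 (hfg.mono fun ω h ⟨hne, hE⟩ => hne (h hE))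
  refine measure_eq_zero_of_setIntegral_eq_zero_of_condExp_pos hm
    ((integrable_const 1).indicator hE) hpos hne ?_
  rw [setIntegral_indicator hE]
  exact setIntegral_measure_zero _ hnull

theorem condExp_indicator_compl [IsFiniteMeasure μ] (hm : m ≤ m₀) {E : Set Ω}
    (hE : MeasurableSet E) : μ[Eᶜ.indicator 1 | m] =ᵐ[μ] 1 - μ[E.indicator (1 : Ω → ℝ) | m] := by
  rw [Set.indicator_compl]
  filter_upwards [condExp_sub (integrable_const (1 : ℝ)) ((integrable_const 1).indicator hE) m]
    with ω hω
  exact hω.trans (by rw [condExp_const hm]; rfl)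

theorem ae_condExp_indicator_pos_of_condExp_mem_Ioo [IsFiniteMeasure μ] (hm : m ≤ m₀)
    {T : Ω → Fin 2} (hT : Measurable T) {p : Ω → ℝ}
    (hp : p =ᵐ[μ] μ[fun ω => if T ω = 1 then 1 else 0 | m])
    (hp_mem : ∀ᵐ ω ∂μ, 0 < p ω ∧ p ω < 1) (t : Fin 2) :
    ∀ᵐ ω ∂μ, 0 < μ[{ω | T ω = t}.indicator (1 : Ω → ℝ) | m] ω := by
  have hind : (fun ω => if T ω = 1 then (1 : ℝ) else 0) = {ω | T ω = 1}.indicator 1 := by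
    ext ω; simp [Set.indicator_apply]
  rw [hind] at hp
  match t with
  | 0 =>
    have hcompl : {ω | T ω = 0} = {ω | T ω = 1}ᶜ := by
      ext ω
      have := (T ω).isLt
      simp only [Set.mem_ofPred_eq, Set.mem_compl_iff, Fin.ext_iff, Fin.val_zero, Fin.val_one]
      omega
    rw [hcompl]
    filter_upwards [condExp_indicator_compl (E := {ω | T ω = 1}) hm
      (hT (measurableSet_singleton 1)), hp, hp_mem] with ω hω hpω hmemω
    rw [hω, Pi.sub_apply, ← hpω, Pi.one_apply]
    linarith [hmemω.2]
  | 1 =>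
    filter_upwards [hp, hp_mem] with ω hpω hmemω
    exact hpω ▸ hmemω.1

end ConditionalProbability

theorem ProbabilityTheory.IdentDistrib.setIntegral_preimage_eq {Ω Ω' α : Type*}
    [MeasurableSpace Ω] [MeasurableSpace Ω'] [MeasurableSpace α] {μ : Measure Ω}
    {ν : Measure Ω'} {f : Ω → α} {g : Ω' → α} (h : IdentDistrib f g μ ν) {φ : α → ℝ}
    (hφ : Measurable φ) {B : Set α} (hB : MeasurableSet B) :
    ∫ ω in f ⁻¹' B, φ (f ω) ∂μ = ∫ ω in g ⁻¹' B, φ (g ω) ∂ν := by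
  rw [← setIntegral_map hB hφ.aestronglyMeasurable h.aemeasurable_fst,
    ← setIntegral_map hB hφ.aestronglyMeasurable h.aemeasurable_snd, h.map_eq]

section Intervention

variable {Ω 𝒞 𝒳 𝒯 : Type*} [MeasurableSpace Ω] [MeasurableSpace 𝒞] [MeasurableSpace 𝒳]
  [MeasurableSpace 𝒯] {C : Ω → 𝒞} {X : Ω → 𝒳} {T : Ω → 𝒯} {Y : Ω → ℝ} {P Q : Measure Ω}
  {u : 𝒞 × 𝒳 × 𝒯 → ℝ} {t : 𝒯}

theorem ae_eq_section_of_ae_eq_of_condExp_indicator_pos [MeasurableSingletonClass 𝒯]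
    [IsFiniteMeasure P] (hC : Measurable C) (hX : Measurable X) (hT : Measurable T)
    {k : 𝒞 × 𝒳 × 𝒯 → ℝ} (hk : Measurable k) (hu : Measurable u)
    (hku : (fun ω => k (C ω, X ω, T ω)) =ᵐ[P] fun ω => u (C ω, X ω, T ω))
    (hpos : ∀ᵐ ω ∂P, 0 < P[{ω | T ω = t}.indicator (1 : Ω → ℝ) |
      MeasurableSpace.comap (fun ω => (C ω, X ω)) inferInstance] ω) :
    (fun ω => k (C ω, X ω, t)) =ᵐ[P] fun ω => u (C ω, X ω, t) := by
  have hsection {v : 𝒞 × 𝒳 × 𝒯 → ℝ} (hv : Measurable v) :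
      Measurable[MeasurableSpace.comap (fun ω => (C ω, X ω)) inferInstance]
        fun ω => v (C ω, X ω, t) :=
    (show Measurable fun z : 𝒞 × 𝒳 => v (z.1, z.2, t) by fun_prop).comp (comap_measurable _)
  refine ae_eq_of_ae_eq_on_of_condExp_indicator_pos (hC.prodMk hX).comap_le (hsection hk)
    (hsection hu) (hT (measurableSet_singleton t)) ?_ hpos
  filter_upwards [hku] with ω hω hTω
  rwa [← show T ω = t from hTω]

theorem integrable_of_identDistrib_of_ae_eq_const (hu : Measurable u)
    (hL : IdentDistrib (fun ω => (C ω, X ω)) (fun ω => (C ω, X ω)) P Q)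
    (hTt : ∀ᵐ ω ∂P, T ω = t) (hint : Integrable (fun ω => u (C ω, X ω, T ω)) P) :
    Integrable (fun ω => u (C ω, X ω, t)) Q := by
  have hu_t : Measurable fun z : 𝒞 × 𝒳 => u (z.1, z.2, t) := by fun_prop
  refine (hL.comp hu_t).integrable_iff.1 (hint.congr ?_)
  filter_upwards [hTt] with ω hω
  simp [hω]

theorem ae_eq_condExp_of_identDistrib_of_ae_eq_const [IsFiniteMeasure P] [IsFiniteMeasure Q]
    (hC : Measurable C) (hX : Measurable X) (hT : Measurable T) (hu : Measurable u)
    (hL : IdentDistrib (fun ω => (C ω, X ω)) (fun ω => (C ω, X ω)) P Q)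
    (hTt : ∀ᵐ ω ∂P, T ω = t) (hY : Integrable Y P)
    (huY : (fun ω => u (C ω, X ω, T ω)) =ᵐ[P]
      P[Y | MeasurableSpace.comap (fun ω => (C ω, X ω, T ω)) inferInstance])
    {g : 𝒳 → ℝ} (hg : Measurable g)
    (hgY : (fun ω => g (X ω)) =ᵐ[P] P[Y | MeasurableSpace.comap X inferInstance]) :
    (fun ω => g (X ω)) =ᵐ[Q]
      Q[fun ω => u (C ω, X ω, t) | MeasurableSpace.comap X inferInstance] := by
  have hLX : IdentDistrib X X P Q := hL.comp measurable_snd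
  have hu_t : Measurable fun z : 𝒞 × 𝒳 => u (z.1, z.2, t) := by fun_prop
  have hgQ : Integrable (fun ω => g (X ω)) Q :=
    (hLX.comp hg).integrable_iff.1 (integrable_condExp.congr hgY.symm)
  refine ae_eq_condExp_of_forall_setIntegral_eq hX.comap_le
    (integrable_of_identDistrib_of_ae_eq_const hu hL hTt (integrable_condExp.congr huY.symm))
    (fun _ _ _ => hgQ.integrableOn) ?_
    (hg.comp (comap_measurable X)).aestronglyMeasurable
  rintro _ ⟨B, hB, rfl⟩ -
  have hBCXT : MeasurableSet[MeasurableSpace.comap (fun ω => (C ω, X ω, T ω)) inferInstance]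
      (X ⁻¹' B) :=
    ⟨Set.univ ×ˢ B ×ˢ Set.univ, MeasurableSet.univ.prod (hB.prod MeasurableSet.univ),
      by ext; simp⟩
  have hBCX : X ⁻¹' B = (fun ω => (C ω, X ω)) ⁻¹' (Set.univ ×ˢ B) := by ext; simp
  calc ∫ ω in X ⁻¹' B, g (X ω) ∂Q
      = ∫ ω in X ⁻¹' B, g (X ω) ∂P := (hLX.setIntegral_preimage_eq hg hB).symm
    _ = ∫ ω in X ⁻¹' B, Y ω ∂P := by
        rw [setIntegral_congr_ae (hX hB) (hgY.mono fun _ h _ => h),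
          setIntegral_condExp hX.comap_le hY ⟨B, hB, rfl⟩]
    _ = ∫ ω in X ⁻¹' B, u (C ω, X ω, T ω) ∂P := by
        rw [setIntegral_congr_ae (hX hB) (huY.mono fun _ h _ => h),
          setIntegral_condExp (hC.prodMk (hX.prodMk hT)).comap_le hY hBCXT]
    _ = ∫ ω in X ⁻¹' B, u (C ω, X ω, t) ∂P :=
        setIntegral_congr_ae (hX hB) (hTt.mono fun _ h _ => by rw [h])
    _ = ∫ ω in X ⁻¹' B, u (C ω, X ω, t) ∂Q := by
        rw [hBCX]
        exact hL.setIntegral_preimage_eq hu_t (MeasurableSet.univ.prod hB)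

end Intervention

theorem fuzzy_rdd_ACE_identification_general
    {Ω 𝒞 : Type*} [MeasurableSpace Ω] [MeasurableSpace 𝒞]
    (C : Ω → 𝒞) (X : Ω → ℝ) (T : Ω → Fin 2) (Y : Ω → ℝ)
    (hC : Measurable C) (hX : Measurable X) (hT : Measurable T)
    (P₀ P₁ Pf : Measure Ω)
    [IsProbabilityMeasure P₀] [IsProbabilityMeasure P₁] [IsProbabilityMeasure Pf]
    (hT0 : P₀ {ω | T ω = 0} = 1) (hT1 : P₁ {ω | T ω = 1} = 1)
    (hYint : ∀ P ∈ ({P₀, P₁, Pf} : Set (Measure Ω)), Integrable Y P)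
    -- strongly sufficient covariates:
    (h4a : Measure.map (fun ω => (C ω, X ω)) P₀ = Measure.map (fun ω => (C ω, X ω)) P₁ ∧
           Measure.map (fun ω => (C ω, X ω)) P₀ = Measure.map (fun ω => (C ω, X ω)) Pf)
    (u : 𝒞 × ℝ × Fin 2 → ℝ) (hu_meas : Measurable u)
    (h4b : ∀ P ∈ ({P₀, P₁, Pf} : Set (Measure Ω)),
      (fun ω => u (C ω, X ω, T ω)) =ᵐ[P]
        P[Y | MeasurableSpace.comap (fun ω => (C ω, X ω, T ω)) inferInstance])
    (p : 𝒞 × ℝ → ℝ)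
    (hp_ver : (fun ω => p (C ω, X ω)) =ᵐ[Pf]
      Pf[(fun ω => if T ω = 1 then (1 : ℝ) else 0) |
        MeasurableSpace.comap (fun ω => (C ω, X ω)) inferInstance])
    (hp_pos : ∀ᵐ ω ∂Pf, 0 < p (C ω, X ω) ∧ p (C ω, X ω) < 1)
    -- k(C, X, T) is a version of E_{P_f}[Y | σ(C, X, T)]
    (k : 𝒞 × ℝ × Fin 2 → ℝ) (hk_meas : Measurable k)
    (hk : (fun ω => k (C ω, X ω, T ω)) =ᵐ[Pf]
      Pf[Y | MeasurableSpace.comap (fun ω => (C ω, X ω, T ω)) inferInstance])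
    -- m_t(X) is a version of E_{P_t}[Y | σ(X)] for t = 0, 1
    (m₀ m₁ : ℝ → ℝ) (hm₀_meas : Measurable m₀) (hm₁_meas : Measurable m₁)
    (hm₀ : (fun ω => m₀ (X ω)) =ᵐ[P₀] P₀[Y | MeasurableSpace.comap X inferInstance])
    (hm₁ : (fun ω => m₁ (X ω)) =ᵐ[P₁] P₁[Y | MeasurableSpace.comap X inferInstance])
    -- r(X) is a version of E_{P_f}[k(C, X, 1) − k(C, X, 0) | σ(X)]
    (r : ℝ → ℝ)
    (hr : (fun ω => r (X ω)) =ᵐ[Pf]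
      Pf[(fun ω => k (C ω, X ω, 1) - k (C ω, X ω, 0)) |
        MeasurableSpace.comap X inferInstance]) :
    (fun ω => m₁ (X ω) - m₀ (X ω)) =ᵐ[Pf] (fun ω => r (X ω)) := by
  have hCX : Measurable fun ω => (C ω, X ω) := hC.prodMk hX
  have hprop := ae_condExp_indicator_pos_of_condExp_mem_Ioo hCX.comap_le hT hp_ver hp_pos
  have hku (t : Fin 2) := ae_eq_section_of_ae_eq_of_condExp_indicator_pos hC hX hT hk_meas
    hu_meas (hk.trans (h4b Pf (by simp)).symm) (hprop t)
  have hL₀ : IdentDistrib (fun ω => (C ω, X ω)) (fun ω => (C ω, X ω)) P₀ Pf :=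
    ⟨hCX.aemeasurable, hCX.aemeasurable, h4a.2⟩
  have hL₁ : IdentDistrib (fun ω => (C ω, X ω)) (fun ω => (C ω, X ω)) P₁ Pf :=
    ⟨hCX.aemeasurable, hCX.aemeasurable, h4a.1.symm.trans h4a.2⟩
  have hT₀ : ∀ᵐ ω ∂P₀, T ω = 0 :=
    (mem_ae_iff_prob_eq_one (hT (measurableSet_singleton 0))).2 hT0
  have hT₁ : ∀ᵐ ω ∂P₁, T ω = 1 :=
    (mem_ae_iff_prob_eq_one (hT (measurableSet_singleton 1))).2 hT1
  have hu₀ := integrable_of_identDistrib_of_ae_eq_const hu_meas hL₀ hT₀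
    (integrable_condExp.congr (h4b P₀ (by simp)).symm)
  have hu₁ := integrable_of_identDistrib_of_ae_eq_const hu_meas hL₁ hT₁
    (integrable_condExp.congr (h4b P₁ (by simp)).symm)
  calc (fun ω => m₁ (X ω) - m₀ (X ω))
      =ᵐ[Pf] Pf[fun ω => u (C ω, X ω, 1) | MeasurableSpace.comap X inferInstance]
        - Pf[fun ω => u (C ω, X ω, 0) | MeasurableSpace.comap X inferInstance] :=
        (ae_eq_condExp_of_identDistrib_of_ae_eq_const hC hX hT hu_meas hL₁ hT₁
          (hYint P₁ (by simp)) (h4b P₁ (by simp)) hm₁_meas hm₁).sub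
        (ae_eq_condExp_of_identDistrib_of_ae_eq_const hC hX hT hu_meas hL₀ hT₀
          (hYint P₀ (by simp)) (h4b P₀ (by simp)) hm₀_meas hm₀)
    _ =ᵐ[Pf] Pf[(fun ω => u (C ω, X ω, 1)) - fun ω => u (C ω, X ω, 0) |
        MeasurableSpace.comap X inferInstance] := (condExp_sub hu₁ hu₀ _).symm
    _ =ᵐ[Pf] Pf[(fun ω => k (C ω, X ω, 1) - k (C ω, X ω, 0)) |
        MeasurableSpace.comap X inferInstance] := condExp_congr_ae ((hku 1).sub (hku 0)).symm
    _ =ᵐ[Pf] fun ω => r (X ω) := hr.symm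

/-- Theorem 4.11, fuzzy RDD: with `(C, X)` strongly sufficient covariates,
`k(C, X, T)` a version of `E_{P_f}[Y | σ(C, X, T)]`, `m_t(X)` a version of `E_{P_t}[Y | σ(X)]`
for `t = 0, 1`, and `r(X)` a version of `E_{P_f}[k(C, X, 1) − k(C, X, 0) | σ(X)]`, one has
`m₁(X) − m₀(X) = r(X)` `P_f`-almost surely: the ACE function is identified from `P_f`. -/
theorem fuzzy_rdd_ACE_identification
    {Ω 𝒞 : Type*} [MeasurableSpace Ω] [MeasurableSpace 𝒞] [StandardBorelSpace 𝒞]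
    (C : Ω → 𝒞) (X : Ω → ℝ) (T : Ω → Fin 2) (Y : Ω → ℝ)
    (hC : Measurable C) (hX : Measurable X) (hT : Measurable T) (hY : Measurable Y)
    (P₀ P₁ Pf : Measure Ω)
    [IsProbabilityMeasure P₀] [IsProbabilityMeasure P₁] [IsProbabilityMeasure Pf]
    (hT0 : P₀ {ω | T ω = 0} = 1) (hT1 : P₁ {ω | T ω = 1} = 1)
    (hYint : ∀ P ∈ ({P₀, P₁, Pf} : Set (Measure Ω)), Integrable Y P)
    -- strongly sufficient covariates:
    (h4a : Measure.map (fun ω => (C ω, X ω)) P₀ = Measure.map (fun ω => (C ω, X ω)) P₁ ∧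
           Measure.map (fun ω => (C ω, X ω)) P₀ = Measure.map (fun ω => (C ω, X ω)) Pf)
    (u : 𝒞 × ℝ × Fin 2 → ℝ) (hu_meas : Measurable u)
    (h4b : ∀ P ∈ ({P₀, P₁, Pf} : Set (Measure Ω)),
      (fun ω => u (C ω, X ω, T ω)) =ᵐ[P]
        P[Y | MeasurableSpace.comap (fun ω => (C ω, X ω, T ω)) inferInstance])
    (p : 𝒞 × ℝ → ℝ) (hp_meas : Measurable p) (hp_range : ∀ z, p z ∈ Set.Icc (0 : ℝ) 1)
    (hp_ver : (fun ω => p (C ω, X ω)) =ᵐ[Pf]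
      Pf[(fun ω => if T ω = 1 then (1 : ℝ) else 0) |
        MeasurableSpace.comap (fun ω => (C ω, X ω)) inferInstance])
    (hp_pos : ∀ᵐ ω ∂Pf, 0 < p (C ω, X ω) ∧ p (C ω, X ω) < 1)
    -- k(C, X, T) is a version of E_{P_f}[Y | σ(C, X, T)]
    (k : 𝒞 × ℝ × Fin 2 → ℝ) (hk_meas : Measurable k)
    (hk : (fun ω => k (C ω, X ω, T ω)) =ᵐ[Pf]
      Pf[Y | MeasurableSpace.comap (fun ω => (C ω, X ω, T ω)) inferInstance])
    -- m_t(X) is a version of E_{P_t}[Y | σ(X)] for t = 0, 1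
    (m₀ m₁ : ℝ → ℝ) (hm₀_meas : Measurable m₀) (hm₁_meas : Measurable m₁)
    (hm₀ : (fun ω => m₀ (X ω)) =ᵐ[P₀] P₀[Y | MeasurableSpace.comap X inferInstance])
    (hm₁ : (fun ω => m₁ (X ω)) =ᵐ[P₁] P₁[Y | MeasurableSpace.comap X inferInstance])
    -- r(X) is a version of E_{P_f}[k(C, X, 1) − k(C, X, 0) | σ(X)]
    (r : ℝ → ℝ) (hr_meas : Measurable r)
    (hr : (fun ω => r (X ω)) =ᵐ[Pf]
      Pf[(fun ω => k (C ω, X ω, 1) - k (C ω, X ω, 0)) |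
        MeasurableSpace.comap X inferInstance]) :
    (fun ω => m₁ (X ω) - m₀ (X ω)) =ᵐ[Pf] (fun ω => r (X ω)) :=
  fuzzy_rdd_ACE_identification_general C X T Y hC hX hT P₀ P₁ Pf hT0 hT1 hYint h4a u hu_meas h4b p
    hp_ver hp_pos k hk_meas hk m₀ m₁ hm₀_meas hm₁_meas hm₀ hm₁ r hr
end

section
/- Let 𝒞 be a set, c ∈ 𝒞, x₀ ∈ ℝ, and let k : 𝒞×ℝ×{0,1} → ℝ, p : 𝒞×ℝ → [0,1] and q : 𝒞×ℝ → ℝ be functions. Assume: (i) for every x ∈ ℝ, q(c, x) = k(c, x, 1)·p(c, x) + k(c, x, 0)·(1 − p(c, x)); (ii) for t = 0, 1 the map x ↦ k(c, x, t) is continuous at x₀; (iii) the one-sided limits p⁺ := lim_{ε↓0} p(c, x₀+ε) and p⁻ := lim_{ε↓0} p(c, x₀−ε) exist and p⁺ − p⁻ ≠ 0. Then lim_{ε↓0} [k(c, x₀+ε, 1) − k(c, x₀−ε, 0)] = lim_{ε↓0} (q(c, x₀+ε) − q(c, x₀−ε)) / (p(c, x₀+ε) − p(c, x₀−ε)), and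 both limits equal k(c, x₀, 1) − k(c, x₀, 0). -/
open Filter Topology

/-!
Since `k(c, ·, t)` is continuous at `x₀`, both one-sided limits of `k` agree, so by (i) the
outcome jump tends to `k(c, x₀, 1)·(p⁺ − p⁻) + k(c, x₀, 0)·(p⁻ − p⁺)
= (k(c, x₀, 1) − k(c, x₀, 0))·(p⁺ − p⁻)`; dividing by the nonzero propensity jump `p⁺ − p⁻`
leaves `k(c, x₀, 1) − k(c, x₀, 0)`.
-/

theorem ContinuousAt.tendsto_comp_add_nhdsWithin_zero {G Y : Type*} [TopologicalSpace G]
    [AddZeroClass G] [ContinuousAdd G] [TopologicalSpace Y] {f : G → Y} {a : G}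
    (hf : ContinuousAt f a) (s : Set G) :
    Tendsto (fun ε => f (a + ε)) (𝓝[s] 0) (𝓝 (f a)) :=
  hf.tendsto.comp
    (((continuous_const_add a).tendsto' 0 a (add_zero a)).mono_left nhdsWithin_le_nhds)

theorem ContinuousAt.tendsto_comp_sub_nhdsWithin_zero {G Y : Type*} [TopologicalSpace G]
    [AddGroup G] [IsTopologicalAddGroup G] [TopologicalSpace Y] {f : G → Y} {a : G}
    (hf : ContinuousAt f a) (s : Set G) :
    Tendsto (fun ε => f (a - ε)) (𝓝[s] 0) (𝓝 (f a)) :=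
  hf.tendsto.comp
    (((continuous_const.sub continuous_id).tendsto' 0 a (sub_zero a)).mono_left
      nhdsWithin_le_nhds)

theorem mixture_sub_mixture {R : Type*} [CommRing R] (a b p p' : R) :
    (a * p + b * (1 - p)) - (a * p' + b * (1 - p')) = (a - b) * (p - p') := by
  ring

theorem Filter.Tendsto.mixture_sub_div_sub {α 𝕜 : Type*} [NormedField 𝕜] {l : Filter α}
    {a₁ a₂ b₁ b₂ p₁ p₂ : α → 𝕜} {A B P₁ P₂ : 𝕜}
    (ha₁ : Tendsto a₁ l (𝓝 A)) (ha₂ : Tendsto a₂ l (𝓝 A))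
    (hb₁ : Tendsto b₁ l (𝓝 B)) (hb₂ : Tendsto b₂ l (𝓝 B))
    (hp₁ : Tendsto p₁ l (𝓝 P₁)) (hp₂ : Tendsto p₂ l (𝓝 P₂)) (hP : P₁ - P₂ ≠ 0) :
    Tendsto (fun x => ((a₁ x * p₁ x + b₁ x * (1 - p₁ x)) - (a₂ x * p₂ x + b₂ x * (1 - p₂ x)))
      / (p₁ x - p₂ x)) l (𝓝 (A - B)) := by
  have hnum : Tendsto
      (fun x => (a₁ x * p₁ x + b₁ x * (1 - p₁ x)) - (a₂ x * p₂ x + b₂ x * (1 - p₂ x))) l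
      (𝓝 ((A - B) * (P₁ - P₂))) := by
    rw [← mixture_sub_mixture]
    exact ((ha₁.mul hp₁).add (hb₁.mul (tendsto_const_nhds.sub hp₁))).sub
      ((ha₂.mul hp₂).add (hb₂.mul (tendsto_const_nhds.sub hp₂)))
  rw [← mul_div_cancel_right₀ (A - B) hP]
  exact hnum.div (hp₁.sub hp₂) hP

theorem wald_ratio_identification_deterministic_general
    {𝒞 : Type*} (c : 𝒞) (x₀ : ℝ)
    (k : 𝒞 × ℝ × Fin 2 → ℝ) (p : 𝒞 × ℝ → ℝ) (q : 𝒞 × ℝ → ℝ)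
    -- (i): tower-property decomposition of q in terms of k and p
    (hq : ∀ x : ℝ, q (c, x) = k (c, x, 1) * p (c, x) + k (c, x, 0) * (1 - p (c, x)))
    -- (ii): continuity of x ↦ k(c, x, t) at x₀ for t = 0, 1
    (hk_cont : ∀ t : Fin 2, ContinuousAt (fun x => k (c, x, t)) x₀)
    -- (iii): one-sided limits of the propensity exist and differ
    (pplus pminus : ℝ)
    (hpplus : Tendsto (fun ε => p (c, x₀ + ε)) (𝓝[>] (0 : ℝ)) (𝓝 pplus))
    (hpminus : Tendsto (fun ε => p (c, x₀ - ε)) (𝓝[>] (0 : ℝ)) (𝓝 pminus))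
    (hne : pplus - pminus ≠ 0) :
    Tendsto (fun ε => k (c, x₀ + ε, 1) - k (c, x₀ - ε, 0)) (𝓝[>] (0 : ℝ))
      (𝓝 (k (c, x₀, 1) - k (c, x₀, 0))) ∧
    Tendsto (fun ε => (q (c, x₀ + ε) - q (c, x₀ - ε)) / (p (c, x₀ + ε) - p (c, x₀ - ε)))
      (𝓝[>] (0 : ℝ)) (𝓝 (k (c, x₀, 1) - k (c, x₀, 0))) := by
  have hk_right (t : Fin 2) := (hk_cont t).tendsto_comp_add_nhdsWithin_zero (Set.Ioi 0)
  have hk_left (t : Fin 2) := (hk_cont t).tendsto_comp_sub_nhdsWithin_zero (Set.Ioi 0)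
  refine ⟨(hk_right 1).sub (hk_left 0), ?_⟩
  simp only [hq]
  exact Tendsto.mixture_sub_div_sub (hk_right 1) (hk_left 1) (hk_right 0) (hk_left 0)
    hpplus hpminus hne

/-- deterministic core of Lemma 4.13: with
`q(c, x) = k(c, x, 1)·p(c, x) + k(c, x, 0)·(1 − p(c, x))`, continuity of `x ↦ k(c, x, t)` at
`x₀`, and existing one-sided limits `p⁺ ≠ p⁻` of the propensity, the treatment-based contrast
at the threshold equals the Wald-type ratio of outcome and propensity discontinuities, and
both limits equal `k(c, x₀, 1) − k(c, x₀, 0)`. -/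
theorem wald_ratio_identification_deterministic
    {𝒞 : Type*} (c : 𝒞) (x₀ : ℝ)
    (k : 𝒞 × ℝ × Fin 2 → ℝ) (p : 𝒞 × ℝ → ℝ) (q : 𝒞 × ℝ → ℝ)
    (hp_range : ∀ z, p z ∈ Set.Icc (0 : ℝ) 1)
    -- (i): tower-property decomposition of q in terms of k and p
    (hq : ∀ x : ℝ, q (c, x) = k (c, x, 1) * p (c, x) + k (c, x, 0) * (1 - p (c, x)))
    -- (ii): continuity of x ↦ k(c, x, t) at x₀ for t = 0, 1
    (hk_cont : ∀ t : Fin 2, ContinuousAt (fun x => k (c, x, t)) x₀)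
    -- (iii): one-sided limits of the propensity exist and differ
    (pplus pminus : ℝ)
    (hpplus : Tendsto (fun ε => p (c, x₀ + ε)) (𝓝[>] (0 : ℝ)) (𝓝 pplus))
    (hpminus : Tendsto (fun ε => p (c, x₀ - ε)) (𝓝[>] (0 : ℝ)) (𝓝 pminus))
    (hne : pplus - pminus ≠ 0) :
    Tendsto (fun ε => k (c, x₀ + ε, 1) - k (c, x₀ - ε, 0)) (𝓝[>] (0 : ℝ))
      (𝓝 (k (c, x₀, 1) - k (c, x₀, 0))) ∧
    Tendsto (fun ε => (q (c, x₀ + ε) - q (c, x₀ - ε)) / (p (c, x₀ + ε) - p (c, x₀ - ε)))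
      (𝓝[>] (0 : ℝ)) (𝓝 (k (c, x₀, 1) - k (c, x₀, 0))) :=
  wald_ratio_identification_deterministic_general c x₀ k p q hq hk_cont pplus pminus hpplus hpminus
    hne
end

section
/- Let C, X, T, Y be random variables on a measurable space (Ω, 𝓕) with C valued in a standard Borel space 𝒞, X in ℝ, T in {0,1}, Y in ℝ, let P_f be a probability measure under which Y is integrable, and let x₀ ∈ ℝ. Let k : 𝒞×ℝ×{0,1} → ℝ, p : 𝒞×ℝ → [0,1] and q : 𝒞×ℝ → ℝ be measurable functions such that, for P_f-almost every ω: (i) q(C(ω), x) = k(C(ω), x, 1)·p(C(ω), x) + k(C(ω), x, 0)·(1 − p(C(ω), x)) for all x ∈ ℝ; (ii) x ↦ k(C(ω), x, t) is continuous at x₀ for t = 0, 1; (iii) the one-sided limits lim_{ε↓0} p(C(ω), x₀±ε) exist and their difference is nonzero. Then, P_f-almost surely, lim_{ε↓0} (q(C, x₀+ε) − q(C, x₀−ε)) / (p(C, x₀+ε) − p(C, x₀−ε)) exists and equals k(C, x₀, 1) − k(C, x₀, 0); consequently, any version of E_{P_f}[lim_{ε↓0} (q(C, x₀+ε) − q(C,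 x₀−ε)) / (p(C, x₀+ε) − p(C, x₀−ε)) | σ(X)] is a version of E_{P_f}[k(C, x₀, 1) − k(C, x₀, 0) | σ(X)]. -/
open MeasureTheory Filter Topology

/-- Since `k₁, k₀` are continuous at `x₀`, the jump of `q` along `u, v` tends to
`(k₁ x₀ - k₀ x₀) * (a - b)`: only the weight `p` jumps. -/
theorem tendsto_mixture_jump_div_weight_jump {α ι 𝕜 : Type*} [TopologicalSpace α]
    [NormedField 𝕜] {l : Filter ι} {u v : ι → α} {x₀ : α} {k₁ k₀ p q : α → 𝕜} {a b : 𝕜}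
    (hq : ∀ x, q x = k₁ x * p x + k₀ x * (1 - p x))
    (hu : Tendsto u l (𝓝 x₀)) (hv : Tendsto v l (𝓝 x₀))
    (hk₁ : ContinuousAt k₁ x₀) (hk₀ : ContinuousAt k₀ x₀)
    (hpu : Tendsto (fun i => p (u i)) l (𝓝 a)) (hpv : Tendsto (fun i => p (v i)) l (𝓝 b))
    (hab : a - b ≠ 0) :
    Tendsto (fun i => (q (u i) - q (v i)) / (p (u i) - p (v i))) l (𝓝 (k₁ x₀ - k₀ x₀)) := by
  have hq_lim : ∀ {w : ι → α} {c : 𝕜}, Tendsto w l (𝓝 x₀) → Tendsto (fun i => p (w i)) l (𝓝 c) →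
      Tendsto (fun i => q (w i)) l (𝓝 (k₁ x₀ * c + k₀ x₀ * (1 - c))) := fun hw hpw => by
    simp only [hq]
    exact ((hk₁.tendsto.comp hw).mul hpw).add
      ((hk₀.tendsto.comp hw).mul (tendsto_const_nhds.sub hpw))
  have hratio := ((hq_lim hu hpu).sub (hq_lim hv hpv)).div (hpu.sub hpv) hab
  have hlimit : (k₁ x₀ * a + k₀ x₀ * (1 - a) - (k₁ x₀ * b + k₀ x₀ * (1 - b))) / (a - b) =
      k₁ x₀ - k₀ x₀ := by
    rw [div_eq_iff hab]
    ring
  exact hlimit ▸ hratio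

theorem tendsto_add_nhdsGT_zero (x₀ : ℝ) : Tendsto (fun ε => x₀ + ε) (𝓝[>] 0) (𝓝 x₀) := by
  simpa using ((continuous_const_add x₀).tendsto 0).mono_left nhdsWithin_le_nhds

theorem tendsto_sub_nhdsGT_zero (x₀ : ℝ) : Tendsto (fun ε => x₀ - ε) (𝓝[>] 0) (𝓝 x₀) := by
  simpa using ((continuous_sub_left x₀).tendsto 0).mono_left nhdsWithin_le_nhds

theorem fuzzy_rdd_wald_ratio_identification_general
    {Ω 𝒞 : Type*} [MeasurableSpace Ω]
    (C : Ω → 𝒞) (X : Ω → ℝ)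
    (Pf : Measure Ω)
    (x₀ : ℝ)
    (k : 𝒞 × ℝ × Fin 2 → ℝ) (p : 𝒞 × ℝ → ℝ) (q : 𝒞 × ℝ → ℝ)
    -- (i): a.s. tower decomposition of q in terms of k and p, for all x
    (hq : ∀ᵐ ω ∂Pf, ∀ x : ℝ,
      q (C ω, x) = k (C ω, x, 1) * p (C ω, x) + k (C ω, x, 0) * (1 - p (C ω, x)))
    -- (ii): a.s. continuity of x ↦ k(C(ω), x, t) at x₀ for t = 0, 1
    (hk_cont : ∀ᵐ ω ∂Pf, ∀ t : Fin 2, ContinuousAt (fun x => k (C ω, x, t)) x₀)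
    -- (iii): a.s. the one-sided limits of the propensity exist and their difference is nonzero
    (hp_lim : ∀ᵐ ω ∂Pf, ∃ pplus pminus : ℝ,
      Tendsto (fun ε => p (C ω, x₀ + ε)) (𝓝[>] (0 : ℝ)) (𝓝 pplus) ∧
      Tendsto (fun ε => p (C ω, x₀ - ε)) (𝓝[>] (0 : ℝ)) (𝓝 pminus) ∧
      pplus - pminus ≠ 0) :
    -- the Wald ratio converges a.s. to k(C, x₀, 1) − k(C, x₀, 0) ...
    (∀ᵐ ω ∂Pf,
      Tendsto (fun ε =>
          (q (C ω, x₀ + ε) - q (C ω, x₀ - ε)) / (p (C ω, x₀ + ε) - p (C ω, x₀ - ε)))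
        (𝓝[>] (0 : ℝ)) (𝓝 (k (C ω, x₀, 1) - k (C ω, x₀, 0)))) ∧
    -- ... hence for any L realizing that limit a.s., the conditional expectations coincide
    (∀ L : Ω → ℝ,
      (∀ᵐ ω ∂Pf,
        Tendsto (fun ε =>
            (q (C ω, x₀ + ε) - q (C ω, x₀ - ε)) / (p (C ω, x₀ + ε) - p (C ω, x₀ - ε)))
          (𝓝[>] (0 : ℝ)) (𝓝 (L ω))) →
      Pf[L | MeasurableSpace.comap X inferInstance]
        =ᵐ[Pf] Pf[(fun ω => k (C ω, x₀, 1) - k (C ω, x₀, 0)) |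
          MeasurableSpace.comap X inferInstance]) := by
  have hwald : ∀ᵐ ω ∂Pf,
      Tendsto (fun ε =>
          (q (C ω, x₀ + ε) - q (C ω, x₀ - ε)) / (p (C ω, x₀ + ε) - p (C ω, x₀ - ε)))
        (𝓝[>] (0 : ℝ)) (𝓝 (k (C ω, x₀, 1) - k (C ω, x₀, 0))) := by
    filter_upwards [hq, hk_cont, hp_lim] with ω hqω hkω ⟨_, _, hpplus, hpminus, hjump⟩
    exact tendsto_mixture_jump_div_weight_jump hqω (tendsto_add_nhdsGT_zero x₀)
      (tendsto_sub_nhdsGT_zero x₀) (hkω 1) (hkω 0) hpplus hpminus hjump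
  refine ⟨hwald, fun L hL => condExp_congr_ae ?_⟩
  filter_upwards [hwald, hL] with ω hωk hωL
  exact tendsto_nhds_unique hωL hωk

/-- Theorem 4.14, fuzzy RDD, IV/Wald form: under the a.s. tower decomposition,
continuity, and nonzero one-sided propensity discontinuity, the Wald-type ratio of outcome and
propensity discontinuities converges `P_f`-a.s. to `k(C, x₀, 1) − k(C, x₀, 0)`; consequently any
version of its conditional expectation given `σ(X)` is a version of
`E_{P_f}[k(C, x₀, 1) − k(C, x₀, 0) | σ(X)]`. -/
theorem fuzzy_rdd_wald_ratio_identification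
    {Ω 𝒞 : Type*} [MeasurableSpace Ω] [MeasurableSpace 𝒞] [StandardBorelSpace 𝒞]
    (C : Ω → 𝒞) (X : Ω → ℝ) (T : Ω → Fin 2) (Y : Ω → ℝ)
    (hC : Measurable C) (hX : Measurable X) (hT : Measurable T) (hY : Measurable Y)
    (Pf : Measure Ω) [IsProbabilityMeasure Pf] (hYint : Integrable Y Pf)
    (x₀ : ℝ)
    (k : 𝒞 × ℝ × Fin 2 → ℝ) (p : 𝒞 × ℝ → ℝ) (q : 𝒞 × ℝ → ℝ)
    (hk_meas : Measurable k) (hp_meas : Measurable p) (hq_meas : Measurable q)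
    (hp_range : ∀ z, p z ∈ Set.Icc (0 : ℝ) 1)
    -- (i): a.s. tower decomposition of q in terms of k and p, for all x
    (hq : ∀ᵐ ω ∂Pf, ∀ x : ℝ,
      q (C ω, x) = k (C ω, x, 1) * p (C ω, x) + k (C ω, x, 0) * (1 - p (C ω, x)))
    -- (ii): a.s. continuity of x ↦ k(C(ω), x, t) at x₀ for t = 0, 1
    (hk_cont : ∀ᵐ ω ∂Pf, ∀ t : Fin 2, ContinuousAt (fun x => k (C ω, x, t)) x₀)
    -- (iii): a.s. the one-sided limits of the propensity exist and their difference is nonzero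
    (hp_lim : ∀ᵐ ω ∂Pf, ∃ pplus pminus : ℝ,
      Tendsto (fun ε => p (C ω, x₀ + ε)) (𝓝[>] (0 : ℝ)) (𝓝 pplus) ∧
      Tendsto (fun ε => p (C ω, x₀ - ε)) (𝓝[>] (0 : ℝ)) (𝓝 pminus) ∧
      pplus - pminus ≠ 0) :
    -- the Wald ratio converges a.s. to k(C, x₀, 1) − k(C, x₀, 0) ...
    (∀ᵐ ω ∂Pf,
      Tendsto (fun ε =>
          (q (C ω, x₀ + ε) - q (C ω, x₀ - ε)) / (p (C ω, x₀ + ε) - p (C ω, x₀ - ε)))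
        (𝓝[>] (0 : ℝ)) (𝓝 (k (C ω, x₀, 1) - k (C ω, x₀, 0)))) ∧
    -- ... hence for any L realizing that limit a.s., the conditional expectations coincide
    (∀ L : Ω → ℝ,
      (∀ᵐ ω ∂Pf,
        Tendsto (fun ε =>
            (q (C ω, x₀ + ε) - q (C ω, x₀ - ε)) / (p (C ω, x₀ + ε) - p (C ω, x₀ - ε)))
          (𝓝[>] (0 : ℝ)) (𝓝 (L ω))) →
      Pf[L | MeasurableSpace.comap X inferInstance]
        =ᵐ[Pf] Pf[(fun ω => k (C ω, x₀, 1) - k (C ω, x₀, 0)) |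
          MeasurableSpace.comap X inferInstance]) :=
  fuzzy_rdd_wald_ratio_identification_general C X Pf x₀ k p q hq hk_cont hp_lim
end

section
/- Let (Ω, 𝓕) be a measurable space, S a finite nonempty set, and (P_σ)_{σ∈S} a family of probability measures on (Ω, 𝓕). Let U and V be random variables on Ω taking values in standard Borel spaces, and suppose the joint law of (U, V) is the same under P_σ for every σ ∈ S. Then U ⫫ Σ | V: for every bounded measurable real-valued function h there exists a single measurable function w such that w(V) is a version of E_{P_σ}[h(U) | σ(V)] simultaneously for every σ ∈ S. -/
open MeasureTheory ProbabilityTheory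

/-! The regular conditional distribution of `U` given `V` is the disintegration of the joint law
of `(V, U)`, so a regime-independent joint law yields one kernel `κ` serving every regime, and
`w b := ∫ a, h a ∂κ b` is then a common version of all the conditional expectations. -/

theorem ProbabilityTheory.condDistrib_eq_of_map_prodMk_eq {Ω α β : Type*} [MeasurableSpace Ω]
    [MeasurableSpace α] [StandardBorelSpace α] [Nonempty α] [MeasurableSpace β]
    {μ ν : Measure Ω} [IsFiniteMeasure μ] [IsFiniteMeasure ν] {X : Ω → β} {Y : Ω → α}
    (hlaw : μ.map (fun ω => (X ω, Y ω)) = ν.map (fun ω => (X ω, Y ω))) :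
    condDistrib Y X μ = condDistrib Y X ν := by
  simp only [condDistrib, hlaw]

theorem MeasureTheory.Measure.map_prodMk_swap_eq {Ω α β : Type*} [MeasurableSpace Ω]
    [MeasurableSpace α] [MeasurableSpace β] {μ ν : Measure Ω} {X : Ω → α} {Y : Ω → β}
    (hX : Measurable X) (hY : Measurable Y)
    (hlaw : μ.map (fun ω => (X ω, Y ω)) = ν.map (fun ω => (X ω, Y ω))) :
    μ.map (fun ω => (Y ω, X ω)) = ν.map (fun ω => (Y ω, X ω)) := by
  have hswap := congrArg (Measure.map Prod.swap) hlaw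
  rwa [Measure.map_map measurable_swap (hX.prodMk hY),
    Measure.map_map measurable_swap (hX.prodMk hY)] at hswap

theorem extended_condIndep_of_regime_indep_law_general
    {Ω S α β : Type*} [MeasurableSpace Ω] [Nonempty S]
    [MeasurableSpace α] [StandardBorelSpace α]
    [MeasurableSpace β]
    (P : S → Measure Ω) [∀ σ, IsProbabilityMeasure (P σ)]
    (U : Ω → α) (V : Ω → β) (hU : Measurable U) (hV : Measurable V)
    (hlaw : ∀ σ σ' : S,
      Measure.map (fun ω => (U ω, V ω)) (P σ) = Measure.map (fun ω => (U ω, V ω)) (P σ')) :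
    ∀ h : α → ℝ, Measurable h → (∃ M, ∀ a, |h a| ≤ M) →
      ∃ w : β → ℝ, Measurable w ∧ ∀ σ : S,
        (fun ω => w (V ω)) =ᵐ[P σ]
          (P σ)[(fun ω => h (U ω)) | MeasurableSpace.comap V inferInstance] := by
  rintro h hh ⟨M, hM⟩
  obtain ⟨σ₀⟩ := ‹Nonempty S›
  have : Nonempty α := (nonempty_of_isProbabilityMeasure (P σ₀)).map U
  have hκ : ∀ σ, condDistrib U V (P σ) = condDistrib U V (P σ₀) := fun σ =>
    condDistrib_eq_of_map_prodMk_eq (Measure.map_prodMk_swap_eq hU hV (hlaw σ σ₀))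
  refine ⟨fun b => ∫ a, h a ∂condDistrib U V (P σ₀) b,
    (hh.stronglyMeasurable.comp_measurable measurable_snd).integral_condDistrib.measurable,
    fun σ => ?_⟩
  have hint : Integrable (fun ω => h (U ω)) (P σ) :=
    .of_bound (hh.comp hU).aestronglyMeasurable M (ae_of_all _ fun ω => hM (U ω))
  rw [← hκ σ]
  exact (condExp_ae_eq_integral_condDistrib hV hU.aemeasurable hh.stronglyMeasurable hint).symm

/-- extended conditional independence from a regime-independent joint law:
if the joint law of `(U, V)` is the same under every regime `P_σ`, `σ ∈ S`, then `U ⫫ Σ | V`: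
for every bounded measurable `h` there is a single measurable `w` such that `w(V)` is a version
of `E_{P_σ}[h(U) | σ(V)]` simultaneously for every `σ ∈ S`. -/
theorem extended_condIndep_of_regime_indep_law
    {Ω S α β : Type*} [MeasurableSpace Ω] [Finite S] [Nonempty S]
    [MeasurableSpace α] [StandardBorelSpace α]
    [MeasurableSpace β] [StandardBorelSpace β]
    (P : S → Measure Ω) [∀ σ, IsProbabilityMeasure (P σ)]
    (U : Ω → α) (V : Ω → β) (hU : Measurable U) (hV : Measurable V)
    (hlaw : ∀ σ σ' : S,
      Measure.map (fun ω => (U ω, V ω)) (P σ) = Measure.map (fun ω => (U ω, V ω)) (P σ')) :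
    ∀ h : α → ℝ, Measurable h → (∃ M, ∀ a, |h a| ≤ M) →
      ∃ w : β → ℝ, Measurable w ∧ ∀ σ : S,
        (fun ω => w (V ω)) =ᵐ[P σ]
          (P σ)[(fun ω => h (U ω)) | MeasurableSpace.comap V inferInstance] :=
  extended_condIndep_of_regime_indep_law_general P U V hU hV hlaw
end

section
/- Let (Ω, 𝓕) be a measurable space, S a finite nonempty set, and (P_σ)_{σ∈S} a family of probability measures on (Ω, 𝓕). Let U, V, W, Y be random variables on Ω taking values in standard Borel spaces. Assume: (i) U ⫫ Σ | (V, W), i.e. for every bounded measurable real h there is a single measurable function w_h such that w_h(V, W) is a version of E_{P_σ}[h(U) | σ(V, W)] for every σ ∈ S; and (ii) Y ⫫ Σ | (U, V, W), i.e. for every bounded measurable real g there is a single measurable function u_g such that u_g(U, V, W) is a version of E_{P_σ}[g(Y) | σ(U, V, W)] for every σ ∈ S. Then Y ⫫ Σ | (V, W): for every bounded measurable real g there is a single measurable function r_g such that r_g(V, W) is a version of E_{P_σ}[g(Y) | σ(V, W)] for every σ ∈ S. -/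
/-!
Write `Z = (V, W)`. By (ii) and the tower property, `E_σ[g(Y) | Z] = E_σ[u(U, Z) | Z]` for a
single `u`, so it suffices that `E_σ[u(U, Z) | Z]` has a version not depending on `σ` for every
integrable `u(U, Z)`. For `u = 1_{A × B}` that version is `1_B(Z) w_A(Z)`, with `w_A` given by (i).
A Dynkin argument extends this to indicators of all measurable subsets of `α × β`, monotone
convergence to all nonnegative measurable `u`, and `u = u⁺ - u⁻` to integrable `u`. The middle
steps use the `ℝ≥0∞`-valued conditional expectation, for which countable sums and suprema need
no integrability.
-/

open scoped ENNReal

namespace MeasureTheory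

section CondLExp

variable {Ω : Type*} {m m₀ : MeasurableSpace Ω} {μ : Measure[m₀] Ω}

theorem condLExp_sub {X Y : Ω → ℝ≥0∞} (hX : AEMeasurable X μ) (hXY : X ≤ᵐ[μ] Y)
    (hX_fin : ∫⁻ ω, X ω ∂μ ≠ ∞) :
    μ⁻[Y - X|m] =ᵐ[μ] μ⁻[Y|m] - μ⁻[X|m] := by
  have hY : Y =ᵐ[μ] (Y - X) + X := by
    filter_upwards [hXY] with ω h using (tsub_add_cancel_of_le h).symm
  filter_upwards [condLExp_congr_ae (mΩ := m) hY, condLExp_add_right (mΩ := m) (Y - X) hX,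
    condLExp_ne_top (mΩ := m) hX_fin] with ω hY hadd hfin
  rw [Pi.sub_apply, hY, hadd, Pi.add_apply, ENNReal.add_sub_cancel_right hfin]

theorem condLExp_indicator (hm : m ≤ m₀) [SigmaFinite (μ.trim hm)] (X : Ω → ℝ≥0∞)
    {s : Set Ω} (hs : MeasurableSet[m] s) :
    μ⁻[s.indicator X|m] =ᵐ[μ] s.indicator μ⁻[X|m] := by
  refine (ae_eq_condLExp hm μ _ ((measurable_condLExp m μ X).indicator hs) fun t ht => ?_).symm
  rw [lintegral_indicator (hm s hs), lintegral_indicator (hm s hs),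
    Measure.restrict_restrict (hm s hs), setLIntegral_condLExp hm μ X (hs.inter ht)]

theorem condLExp_iSup (hm : m ≤ m₀) [SigmaFinite (μ.trim hm)] {X : ℕ → Ω → ℝ≥0∞}
    (hX : ∀ n, AEMeasurable (X n) μ) (hmono : Monotone X) :
    μ⁻[fun ω => ⨆ n, X n ω|m] =ᵐ[μ] fun ω => ⨆ n, μ⁻[X n|m] ω := by
  have hmono' : ∀ᵐ ω ∂μ, Monotone fun n => μ⁻[X n|m] ω := by
    filter_upwards [ae_all_iff.2 fun n =>
      condLExp_mono (mΩ := m) (Filter.Eventually.of_forall (hmono (Nat.le_succ n)))] with ω h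
    exact monotone_nat_of_le_succ h
  refine (ae_eq_condLExp hm μ _ (Measurable.iSup fun n => measurable_condLExp m μ (X n))
    fun s hs => ?_).symm
  calc ∫⁻ ω in s, ⨆ n, μ⁻[X n|m] ω ∂μ
        = ⨆ n, ∫⁻ ω in s, μ⁻[X n|m] ω ∂μ :=
        lintegral_iSup' (fun n => (measurable_condLExp' m μ _).aemeasurable)
          (ae_restrict_of_ae hmono')
    _ = ⨆ n, ∫⁻ ω in s, X n ω ∂μ := by simp_rw [setLIntegral_condLExp hm μ _ hs]
    _ = ∫⁻ ω in s, ⨆ n, X n ω ∂μ :=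
        (lintegral_iSup' (fun n => (hX n).restrict) (ae_of_all _ fun ω _ _ h => hmono h ω)).symm

theorem condExp_ae_eq_toReal_condLExp_sub {f : Ω → ℝ} (hf : Integrable f μ) :
    μ[f|m] =ᵐ[μ] fun ω => (μ⁻[fun x => ENNReal.ofReal (f x)|m] ω).toReal
      - (μ⁻[fun x => ENNReal.ofReal (-f x)|m] ω).toReal := by
  have hsub := condExp_sub (m := m) hf.pos_part hf.neg.pos_part
  rw [show ((fun x => max (f x) 0) - fun x => max ((-f) x) 0) = f from
    funext fun x => max_zero_sub_max_neg_zero_eq_self (f x)] at hsub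
  filter_upwards [hsub, toReal_condLExp m hf.aemeasurable.ennreal_ofReal hf.lintegral_lt_top.ne,
    toReal_condLExp m hf.neg.aemeasurable.ennreal_ofReal hf.neg.lintegral_lt_top.ne]
    with ω hsub hpos hneg
  exact hsub.trans (congr_arg₂ (· - ·) hpos.symm hneg.symm)

end CondLExp

section CommonVersion

variable {Ω S β : Type*} [MeasurableSpace Ω] [MeasurableSpace β]
  {P : S → Measure Ω} {Z : Ω → β} {X Y : Ω → ℝ≥0∞}

def HasCommonCondLExpVersion (P : S → Measure Ω) (Z : Ω → β) (X : Ω → ℝ≥0∞) :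
    Prop :=
  ∃ r : β → ℝ≥0∞, Measurable r ∧
    ∀ σ, (fun ω => r (Z ω)) =ᵐ[P σ] (P σ)⁻[X|MeasurableSpace.comap Z inferInstance]

namespace HasCommonCondLExpVersion

theorem zero : HasCommonCondLExpVersion P Z 0 :=
  ⟨0, measurable_const, fun σ => by rw [condLExp_zero]; rfl⟩

theorem add (hX : Measurable X) (hXv : HasCommonCondLExpVersion P Z X)
    (hYv : HasCommonCondLExpVersion P Z Y) : HasCommonCondLExpVersion P Z (X + Y) := by
  obtain ⟨r, hr, hrX⟩ := hXv
  obtain ⟨q, hq, hqY⟩ := hYv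
  exact ⟨r + q, hr.add hq, fun σ =>
    ((hrX σ).add (hqY σ)).trans (condLExp_add_left Y hX.aemeasurable).symm⟩

theorem const_smul (hX : Measurable X) (c : ℝ≥0∞) (hXv : HasCommonCondLExpVersion P Z X) :
    HasCommonCondLExpVersion P Z (c • X) := by
  obtain ⟨r, hr, hrX⟩ := hXv
  exact ⟨c • r, hr.const_smul c, fun σ =>
    ((hrX σ).const_smul c).trans (condLExp_smul X hX.aemeasurable c).symm⟩

theorem tsum {X : ℕ → Ω → ℝ≥0∞} (hX : ∀ n, Measurable (X n))
    (hXv : ∀ n, HasCommonCondLExpVersion P Z (X n)) :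
    HasCommonCondLExpVersion P Z fun ω => ∑' n, X n ω := by
  choose r hr hrX using hXv
  refine ⟨fun y => ∑' n, r n y, Measurable.tsum hr, fun σ => ?_⟩
  rw [show (fun ω => ∑' n, X n ω) = ∑' n, X n from funext fun ω => ENNReal.tsum_apply.symm]
  filter_upwards [ae_all_iff.2 fun n => hrX n σ,
    condLExp_tsum (MeasurableSpace.comap Z inferInstance) fun n => (hX n).aemeasurable]
    with ω hr hsum
  simp only [hsum, ENNReal.tsum_apply, hr]

variable [∀ σ, IsFiniteMeasure (P σ)]

theorem indicator_of_condExp {s : Set Ω} (hs : MeasurableSet s)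
    {w : β → ℝ} (hw : Measurable w)
    (hws : ∀ σ, (fun ω => w (Z ω)) =ᵐ[P σ]
      (P σ)[s.indicator 1|MeasurableSpace.comap Z inferInstance]) :
    HasCommonCondLExpVersion P Z (s.indicator 1) := by
  refine ⟨fun y => ENNReal.ofReal (w y), hw.ennreal_ofReal, fun σ => ?_⟩
  have hofReal :
      s.indicator (1 : Ω → ℝ≥0∞) = fun ω => ENNReal.ofReal (s.indicator 1 ω) := by
    ext ω
    by_cases hω : ω ∈ s <;> simp [hω]
  have hint : Integrable (s.indicator (1 : Ω → ℝ)) (P σ) :=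
    (integrable_const (1 : ℝ)).indicator hs
  filter_upwards [hws σ, condLExp_ofReal (MeasurableSpace.comap Z inferInstance) hint
    (ae_of_all _ (Set.indicator_nonneg fun _ _ => zero_le_one))] with ω hw hind
  rw [hofReal, hind, hw]

theorem one_sub (hZ : Measurable Z) (hX : Measurable X) (hX_le : X ≤ 1)
    (hXv : HasCommonCondLExpVersion P Z X) : HasCommonCondLExpVersion P Z (1 - X) := by
  obtain ⟨r, hr, hrX⟩ := hXv
  refine ⟨1 - r, measurable_const.sub hr, fun σ => ?_⟩
  have hX_fin : ∫⁻ ω, X ω ∂(P σ) ≠ ∞ :=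
    ne_top_of_le_ne_top (by simp) (lintegral_mono hX_le)
  have hsub := condLExp_sub (m := MeasurableSpace.comap Z inferInstance) hX.aemeasurable
    (ae_of_all _ hX_le) hX_fin
  rw [condLExp_one hZ.comap_le] at hsub
  filter_upwards [hrX σ, hsub] with ω hr hsub
  rw [hsub, Pi.sub_apply, Pi.sub_apply, ← hr]
  rfl

theorem indicator_preimage (hZ : Measurable Z) {t : Set β} (ht : MeasurableSet t)
    (hXv : HasCommonCondLExpVersion P Z X) :
    HasCommonCondLExpVersion P Z ((Z ⁻¹' t).indicator X) := by
  obtain ⟨r, hr, hrX⟩ := hXv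
  refine ⟨t.indicator r, hr.indicator ht, fun σ => ?_⟩
  filter_upwards [hrX σ, condLExp_indicator hZ.comap_le X ⟨t, ht, rfl⟩] with ω hr hind
  rw [hind]
  by_cases hω : Z ω ∈ t <;> simp [hω, hr]

theorem iSup {X : ℕ → Ω → ℝ≥0∞} (hZ : Measurable Z) (hX : ∀ n, Measurable (X n))
    (hmono : Monotone X) (hXv : ∀ n, HasCommonCondLExpVersion P Z (X n)) :
    HasCommonCondLExpVersion P Z fun ω => ⨆ n, X n ω := by
  choose r hr hrX using hXv
  refine ⟨fun y => ⨆ n, r n y, Measurable.iSup hr, fun σ => ?_⟩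
  filter_upwards [ae_all_iff.2 fun n => hrX n σ,
    condLExp_iSup hZ.comap_le (fun n => (hX n).aemeasurable) hmono] with ω hr hsup
  simp only [hsup, hr]

end HasCommonCondLExpVersion

end CommonVersion

section Contraction

variable {Ω S α β : Type*} [MeasurableSpace Ω] [MeasurableSpace α] [MeasurableSpace β]
  {P : S → Measure Ω} [∀ σ, IsFiniteMeasure (P σ)] {U : Ω → α} {Z : Ω → β}

theorem hasCommonCondLExpVersion_indicator_preimage_prod (hU : Measurable U) (hZ : Measurable Z)
    (hUv : ∀ s, MeasurableSet s → HasCommonCondLExpVersion P Z ((U ⁻¹' s).indicator 1))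
    {A : Set (α × β)} (hA : MeasurableSet A) :
    HasCommonCondLExpVersion P Z (((fun ω => (U ω, Z ω)) ⁻¹' A).indicator 1) := by
  have hT : Measurable fun ω => (U ω, Z ω) := hU.prodMk hZ
  induction A, hA using
    MeasurableSpace.induction_on_inter generateFrom_prod.symm isPiSystem_prod with
  | empty =>
    rw [Set.preimage_empty, Set.indicator_empty]
    exact .zero
  | basic A hA =>
    obtain ⟨s, hs, t, ht, rfl⟩ := hA
    rw [Set.mk_preimage_prod, Set.inter_comm, ← Set.indicator_indicator]
    exact (hUv s hs).indicator_preimage hZ ht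
  | compl A hA hAv =>
    have hcompl : ((fun ω => (U ω, Z ω)) ⁻¹' Aᶜ).indicator 1
        = 1 - ((fun ω => (U ω, Z ω)) ⁻¹' A).indicator (1 : Ω → ℝ≥0∞) := by
      ext ω
      by_cases hω : (U ω, Z ω) ∈ A <;> simp [hω]
    rw [hcompl]
    exact hAv.one_sub hZ (measurable_one.indicator (hT hA))
      (Set.indicator_le_self' fun _ _ => zero_le_one)
  | iUnion f hdisj hf hfv =>
    rw [Set.preimage_iUnion,
      indicator_iUnion_of_pairwise_disjoint _ (hdisj.mono fun _ _ h => h.preimage _)]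
    exact HasCommonCondLExpVersion.tsum (fun n => measurable_one.indicator (hT (hf n))) hfv

theorem hasCommonCondLExpVersion_comp_prod (hU : Measurable U) (hZ : Measurable Z)
    (hUv : ∀ s, MeasurableSet s → HasCommonCondLExpVersion P Z ((U ⁻¹' s).indicator 1))
    {f : α × β → ℝ≥0∞} (hf : Measurable f) :
    HasCommonCondLExpVersion P Z fun ω => f (U ω, Z ω) := by
  have hT : Measurable fun ω => (U ω, Z ω) := hU.prodMk hZ
  refine Measurable.ennreal_induction
    (motive := fun f => HasCommonCondLExpVersion P Z fun ω => f (U ω, Z ω)) ?_ ?_ ?_ hf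
  · intro c A hA
    have hc : (fun ω => A.indicator (fun _ => c) (U ω, Z ω))
        = c • ((fun ω => (U ω, Z ω)) ⁻¹' A).indicator 1 := by
      ext ω
      by_cases hω : (U ω, Z ω) ∈ A <;> simp [hω]
    rw [hc]
    exact (hasCommonCondLExpVersion_indicator_preimage_prod hU hZ hUv hA).const_smul
      (measurable_one.indicator (hT hA)) c
  · intro f g _ hf _ hfv hgv
    exact hfv.add (hf.comp hT) hgv
  · intro f hf hmono hfv
    exact .iSup hZ (fun n => (hf n).comp hT) (fun n k h ω => hmono h _) hfv

theorem exists_common_condExp_version (hU : Measurable U) (hZ : Measurable Z)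
    (hUv : ∀ s, MeasurableSet s → HasCommonCondLExpVersion P Z ((U ⁻¹' s).indicator 1))
    {u : α × β → ℝ} (hu : Measurable u)
    (hu_int : ∀ σ, Integrable (fun ω => u (U ω, Z ω)) (P σ)) :
    ∃ r : β → ℝ, Measurable r ∧ ∀ σ, (fun ω => r (Z ω)) =ᵐ[P σ]
      (P σ)[fun ω => u (U ω, Z ω)|MeasurableSpace.comap Z inferInstance] := by
  obtain ⟨rpos, hrpos, hrpos_ae⟩ :=
    hasCommonCondLExpVersion_comp_prod hU hZ hUv hu.ennreal_ofReal
  obtain ⟨rneg, hrneg, hrneg_ae⟩ :=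
    hasCommonCondLExpVersion_comp_prod hU hZ hUv hu.neg.ennreal_ofReal
  refine ⟨fun y => (rpos y).toReal - (rneg y).toReal, by fun_prop, fun σ => ?_⟩
  filter_upwards [hrpos_ae σ, hrneg_ae σ, condExp_ae_eq_toReal_condLExp_sub (hu_int σ)]
    with ω hpos hneg hu
  rw [hu, hpos, hneg]
  rfl

end Contraction

end MeasureTheory

open MeasureTheory

theorem extended_condIndep_contraction_decomposition_general
    {Ω S α β γ δ : Type*} [MeasurableSpace Ω]
    [MeasurableSpace α]
    [MeasurableSpace β]
    [MeasurableSpace γ]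
    [MeasurableSpace δ]
    (P : S → Measure Ω) [∀ σ, IsProbabilityMeasure (P σ)]
    (U : Ω → α) (V : Ω → β) (W : Ω → γ) (Y : Ω → δ)
    (hU : Measurable U) (hV : Measurable V) (hW : Measurable W)
    -- (i): U ⫫ Σ | (V, W)
    (hECI₁ : ∀ h : α → ℝ, Measurable h → (∃ M, ∀ a, |h a| ≤ M) →
      ∃ w : β × γ → ℝ, Measurable w ∧ ∀ σ : S,
        (fun ω => w (V ω, W ω)) =ᵐ[P σ]
          (P σ)[(fun ω => h (U ω)) |
            MeasurableSpace.comap (fun ω => (V ω, W ω)) inferInstance])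
    -- (ii): Y ⫫ Σ | (U, V, W)
    (hECI₂ : ∀ g : δ → ℝ, Measurable g → (∃ M, ∀ d, |g d| ≤ M) →
      ∃ u : α × β × γ → ℝ, Measurable u ∧ ∀ σ : S,
        (fun ω => u (U ω, V ω, W ω)) =ᵐ[P σ]
          (P σ)[(fun ω => g (Y ω)) |
            MeasurableSpace.comap (fun ω => (U ω, V ω, W ω)) inferInstance]) :
    -- conclusion: Y ⫫ Σ | (V, W)
    ∀ g : δ → ℝ, Measurable g → (∃ M, ∀ d, |g d| ≤ M) →
      ∃ r : β × γ → ℝ, Measurable r ∧ ∀ σ : S,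
        (fun ω => r (V ω, W ω)) =ᵐ[P σ]
          (P σ)[(fun ω => g (Y ω)) |
            MeasurableSpace.comap (fun ω => (V ω, W ω)) inferInstance] := by
  intro g hg hg_bdd
  have hZ : Measurable fun ω => (V ω, W ω) := hV.prodMk hW
  have hUv : ∀ s, MeasurableSet s → HasCommonCondLExpVersion P (fun ω => (V ω, W ω))
      ((U ⁻¹' s).indicator 1) := by
    intro s hs
    obtain ⟨w, hw, hwU⟩ := hECI₁ (s.indicator 1) (measurable_one.indicator hs)
      ⟨1, fun a => by by_cases ha : a ∈ s <;> simp [ha]⟩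
    exact .indicator_of_condExp (hU hs) hw hwU
  obtain ⟨u, hu, hu_ae⟩ := hECI₂ g hg hg_bdd
  obtain ⟨r, hr, hr_ae⟩ := exists_common_condExp_version hU hZ hUv hu
    fun σ => integrable_condExp.congr (hu_ae σ).symm
  have hle : MeasurableSpace.comap (fun ω => (V ω, W ω)) inferInstance
      ≤ MeasurableSpace.comap (fun ω => (U ω, V ω, W ω)) inferInstance :=
    (comap_measurable (fun ω => (U ω, V ω, W ω))).snd.comap_le
  exact ⟨r, hr, fun σ => (hr_ae σ).trans <| (condExp_congr_ae (hu_ae σ)).trans <|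
    condExp_condExp_of_le hle (hU.prodMk hZ).comap_le⟩

/-- extended contraction/decomposition: if `U ⫫ Σ | (V, W)` and
`Y ⫫ Σ | (U, V, W)`, then `Y ⫫ Σ | (V, W)`: for every bounded measurable `g` there is a single
measurable `r_g` such that `r_g(V, W)` is a version of `E_{P_σ}[g(Y) | σ(V, W)]` for every
`σ ∈ S`. -/
theorem extended_condIndep_contraction_decomposition
    {Ω S α β γ δ : Type*} [MeasurableSpace Ω] [Finite S] [Nonempty S]
    [MeasurableSpace α] [StandardBorelSpace α]
    [MeasurableSpace β] [StandardBorelSpace β]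
    [MeasurableSpace γ] [StandardBorelSpace γ]
    [MeasurableSpace δ] [StandardBorelSpace δ]
    (P : S → Measure Ω) [∀ σ, IsProbabilityMeasure (P σ)]
    (U : Ω → α) (V : Ω → β) (W : Ω → γ) (Y : Ω → δ)
    (hU : Measurable U) (hV : Measurable V) (hW : Measurable W) (hY : Measurable Y)
    -- (i): U ⫫ Σ | (V, W)
    (hECI₁ : ∀ h : α → ℝ, Measurable h → (∃ M, ∀ a, |h a| ≤ M) →
      ∃ w : β × γ → ℝ, Measurable w ∧ ∀ σ : S,
        (fun ω => w (V ω, W ω)) =ᵐ[P σ]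
          (P σ)[(fun ω => h (U ω)) |
            MeasurableSpace.comap (fun ω => (V ω, W ω)) inferInstance])
    -- (ii): Y ⫫ Σ | (U, V, W)
    (hECI₂ : ∀ g : δ → ℝ, Measurable g → (∃ M, ∀ d, |g d| ≤ M) →
      ∃ u : α × β × γ → ℝ, Measurable u ∧ ∀ σ : S,
        (fun ω => u (U ω, V ω, W ω)) =ᵐ[P σ]
          (P σ)[(fun ω => g (Y ω)) |
            MeasurableSpace.comap (fun ω => (U ω, V ω, W ω)) inferInstance]) :
    -- conclusion: Y ⫫ Σ | (V, W)
    ∀ g : δ → ℝ, Measurable g → (∃ M, ∀ d, |g d| ≤ M) →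
      ∃ r : β × γ → ℝ, Measurable r ∧ ∀ σ : S,
        (fun ω => r (V ω, W ω)) =ᵐ[P σ]
          (P σ)[(fun ω => g (Y ω)) |
            MeasurableSpace.comap (fun ω => (V ω, W ω)) inferInstance] :=
  extended_condIndep_contraction_decomposition_general P U V W Y hU hV hW hECI₁ hECI₂
end

section
/- Let C, X, T be random variables on a measurable space (Ω, 𝓕) with C valued in a standard Borel space 𝒞, X in ℝ and T in {0,1}, and let P₀, P₁, Pₛ be probability measures with P₀(T=0)=1 and P₁(T=1)=1. Assume: (4a) the joint law of (C, X) is the same under P₀, P₁ and Pₛ; and (sharp condition) for every σ ∈ {0, 1, s} and every bounded measurable h : {0,1} → ℝ, E_{P_σ}[h(T) | σ(C, X)] = E_{P_σ}[h(T) | σ(X)] P_σ-almost surely. Then C ⫫ Σ | (X, T): for every bounded measurable real-valued function h on 𝒞 there exists a single measurable function w : ℝ×{0,1} → ℝ such that w(X, T) is a version of E_{P_σ}[h(C) | σ(X, T)] simultaneously for every σ ∈ {0, 1, s}. -/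
/-!
Let `κ` be the conditional distribution of `C` given `X`. By (4a) it is the same kernel in all
three regimes, so `w(x, t) := ∫ h dκ(x)` makes `w(X, T) = E_σ[h(C) | X]` in every regime. It
remains to see that also conditioning on `T` changes nothing, which is where the sharp condition
`T ⫫ C | X` enters: for `e = 1{T = t}` and bounded `σ(X)`-measurable `φ`,
`∫ φ E[h(C)|X] e = ∫ φ E[h(C)|X] E[e|X] = ∫ φ h(C) E[e|X] = ∫ φ h(C) E[e|C,X] = ∫ φ h(C) e`.
Since `T` takes finitely many values, every set in `σ(X, T)` is a finite disjoint union of sets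
`{X ∈ A, T = t}`, on which this gives the defining identity of `E[h(C) | X, T]`.
-/

open MeasureTheory ProbabilityTheory

section CondExp

variable {Ω : Type*} {m m₁ m0 : MeasurableSpace Ω} {μ : Measure Ω}

theorem integral_mul_condExp_of_bound (hm : m ≤ m0) [IsFiniteMeasure μ] {φ u : Ω → ℝ} {c : ℝ}
    (hφ : StronglyMeasurable[m] φ) (hφc : ∀ᵐ ω ∂μ, ‖φ ω‖ ≤ c) (hu : Integrable u μ) :
    ∫ ω, φ ω * μ[u|m] ω ∂μ = ∫ ω, φ ω * u ω ∂μ :=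
  calc ∫ ω, φ ω * μ[u|m] ω ∂μ = ∫ ω, μ[φ * u|m] ω ∂μ :=
        integral_congr_ae (condExp_stronglyMeasurable_mul_of_bound hm hφ hu c hφc).symm
    _ = ∫ ω, φ ω * u ω ∂μ := integral_condExp hm

theorem integral_condExp_mul_of_condExp_eq (hm : m ≤ m₁) (hm₁ : m₁ ≤ m0) [IsFiniteMeasure μ]
    {f e : Ω → ℝ} {b c : ℝ} (hf : StronglyMeasurable[m₁] f) (hfb : ∀ᵐ ω ∂μ, ‖f ω‖ ≤ b)
    (he : Integrable e μ) (hec : ∀ᵐ ω ∂μ, ‖e ω‖ ≤ c) (hee : μ[e|m₁] =ᵐ[μ] μ[e|m]) :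
    ∫ ω, μ[f|m] ω * e ω ∂μ = ∫ ω, f ω * e ω ∂μ := by
  have hm0 : m ≤ m0 := hm.trans hm₁
  have hf_int : Integrable f μ := .of_bound (hf.mono hm₁).aestronglyMeasurable b hfb
  calc ∫ ω, μ[f|m] ω * e ω ∂μ = ∫ ω, μ[f|m] ω * μ[e|m] ω ∂μ :=
        (integral_mul_condExp_of_bound hm0 stronglyMeasurable_condExp
          (ae_bdd_norm_condExp_of_ae_bdd_norm hfb) he).symm
    _ = ∫ ω, μ[e|m] ω * μ[f|m] ω ∂μ := by simp_rw [mul_comm]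
    _ = ∫ ω, μ[e|m] ω * f ω ∂μ :=
        integral_mul_condExp_of_bound hm0 stronglyMeasurable_condExp
          (ae_bdd_norm_condExp_of_ae_bdd_norm hec) hf_int
    _ = ∫ ω, f ω * μ[e|m₁] ω ∂μ := integral_congr_ae (hee.mono fun ω hω => by simp [hω, mul_comm])
    _ = ∫ ω, f ω * e ω ∂μ := integral_mul_condExp_of_bound hm₁ hf hfb he

end CondExp

section FiniteValuedConditioning

variable {Ω β γ : Type*} [MeasurableSpace β] [MeasurableSpace γ] {m₁ m0 : MeasurableSpace Ω}
  {μ : Measure Ω} [IsFiniteMeasure μ] {X : Ω → β} {T : Ω → γ} {f : Ω → ℝ} {b : ℝ}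

theorem setIntegral_inter_preimage_singleton_condExp [MeasurableSingletonClass γ]
    (hT : Measurable T) (hXm₁ : MeasurableSpace.comap X ‹_› ≤ m₁) (hm₁ : m₁ ≤ m0)
    (hf : StronglyMeasurable[m₁] f) (hfb : ∀ᵐ ω ∂μ, ‖f ω‖ ≤ b)
    (hTX : ∀ h : γ → ℝ, μ[fun ω => h (T ω) | m₁] =ᵐ[μ]
      μ[fun ω => h (T ω) | MeasurableSpace.comap X ‹_›])
    {A : Set Ω} (hA : MeasurableSet[MeasurableSpace.comap X ‹_›] A) (t : γ) :
    ∫ ω in A ∩ T ⁻¹' {t}, μ[f | MeasurableSpace.comap X ‹_›] ω ∂μ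
      = ∫ ω in A ∩ T ⁻¹' {t}, f ω ∂μ := by
  set e : Ω → ℝ := fun ω => ({t} : Set γ).indicator 1 (T ω)
  have he : Measurable e := (measurable_const.indicator (measurableSet_singleton t)).comp hT
  have hec : ∀ ω, ‖e ω‖ ≤ 1 := fun ω => (norm_indicator_le_norm_self _ _).trans (by simp)
  have hrestrict : ∀ g : Ω → ℝ, ∫ ω in A ∩ T ⁻¹' {t}, g ω ∂μ = ∫ ω, A.indicator g ω * e ω ∂μ := by
    intro g
    rw [← integral_indicator ((hXm₁.trans hm₁ _ hA).inter (hT (measurableSet_singleton t)))]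
    refine integral_congr_ae (.of_forall fun ω => ?_)
    by_cases hωA : ω ∈ A <;> by_cases hωt : T ω = t <;> simp [e, hωA, hωt]
  have hf_int : Integrable f μ := .of_bound (hf.mono hm₁).aestronglyMeasurable b hfb
  have hAf_bound : ∀ᵐ ω ∂μ, ‖A.indicator f ω‖ ≤ b :=
    hfb.mono fun ω hω => (norm_indicator_le_norm_self _ _).trans hω
  rw [hrestrict, hrestrict, ← integral_condExp_mul_of_condExp_eq hXm₁ hm₁
    (hf.indicator (hXm₁ _ hA)) hAf_bound (.of_bound he.aestronglyMeasurable 1 (.of_forall hec))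
    (.of_forall hec) (hTX _)]
  exact integral_congr_ae ((condExp_indicator hf_int hA).mono fun ω hω => by simp [hω])

theorem condExp_comap_prodMk_ae_eq_condExp_comap [Fintype γ] [MeasurableSingletonClass γ]
    (hT : Measurable T) (hXm₁ : MeasurableSpace.comap X ‹_› ≤ m₁) (hm₁ : m₁ ≤ m0)
    (hf : StronglyMeasurable[m₁] f) (hfb : ∀ᵐ ω ∂μ, ‖f ω‖ ≤ b)
    (hTX : ∀ h : γ → ℝ, μ[fun ω => h (T ω) | m₁] =ᵐ[μ]
      μ[fun ω => h (T ω) | MeasurableSpace.comap X ‹_›]) :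
    μ[f | MeasurableSpace.comap (fun ω => (X ω, T ω)) inferInstance] =ᵐ[μ]
      μ[f | MeasurableSpace.comap X ‹_›] := by
  have hX : Measurable X := Measurable.of_comap_le (hXm₁.trans hm₁)
  have hX_le_XT : MeasurableSpace.comap X ‹_› ≤
      MeasurableSpace.comap (fun ω => (X ω, T ω)) inferInstance :=
    le_sup_left.trans_eq (MeasurableSpace.comap_prodMk X T).symm
  have hf_int : Integrable f μ := .of_bound (hf.mono hm₁).aestronglyMeasurable b hfb
  refine (ae_eq_condExp_of_forall_setIntegral_eq (hX.prodMk hT).comap_le hf_int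
    (fun _ _ _ => integrable_condExp.integrableOn) ?_
    (stronglyMeasurable_condExp.mono hX_le_XT).aestronglyMeasurable).symm
  rintro _ ⟨S, hS, rfl⟩ -
  have hslices : (fun ω => (X ω, T ω)) ⁻¹' S = ⋃ t, X ⁻¹' ((·, t) ⁻¹' S) ∩ T ⁻¹' {t} := by
    ext ω; simp
  have hslice_meas (t : γ) : MeasurableSet (X ⁻¹' ((·, t) ⁻¹' S) ∩ T ⁻¹' {t}) :=
    (hX (measurable_prodMk_right hS)).inter (hT (measurableSet_singleton t))
  have hslice_disj : Pairwise (Function.onFun Disjoint fun t => X ⁻¹' ((·, t) ⁻¹' S) ∩ T ⁻¹' {t}) :=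
    fun t t' htt' => (((Set.disjoint_singleton.2 htt').preimage T).mono
      Set.inter_subset_right Set.inter_subset_right)
  rw [hslices,
    integral_iUnion_fintype hslice_meas hslice_disj fun _ => integrable_condExp.integrableOn,
    integral_iUnion_fintype hslice_meas hslice_disj fun _ => hf_int.integrableOn]
  exact Finset.sum_congr rfl fun t _ => setIntegral_inter_preimage_singleton_condExp hT hXm₁ hm₁
    hf hfb hTX ⟨_, measurable_prodMk_right hS, rfl⟩ t

end FiniteValuedConditioning

theorem ProbabilityTheory.condDistrib_congr_of_map_eq {α β 𝒞 : Type*} {_ : MeasurableSpace α}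
    [MeasurableSpace β] [MeasurableSpace 𝒞] [StandardBorelSpace 𝒞] [Nonempty 𝒞]
    {μ ν : Measure α} [IsFiniteMeasure μ] [IsFiniteMeasure ν] {X : α → β} {Y : α → 𝒞}
    (h : μ.map (fun a => (X a, Y a)) = ν.map (fun a => (X a, Y a))) :
    condDistrib Y X μ = condDistrib Y X ν := by
  simp only [condDistrib_def, h]

theorem sharp_rdd_C_indep_regime_given_XT_general
    {Ω 𝒞 : Type*} [MeasurableSpace Ω] [MeasurableSpace 𝒞] [StandardBorelSpace 𝒞]
    (C : Ω → 𝒞) (X : Ω → ℝ) (T : Ω → Fin 2)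
    (hC : Measurable C) (hX : Measurable X) (hT : Measurable T)
    (P₀ P₁ Ps : Measure Ω)
    [IsProbabilityMeasure P₀] [IsProbabilityMeasure P₁] [IsProbabilityMeasure Ps]
    -- (4a): the joint law of (C, X) is the same in all three regimes
    (h4a : Measure.map (fun ω => (C ω, X ω)) P₀ = Measure.map (fun ω => (C ω, X ω)) P₁ ∧
           Measure.map (fun ω => (C ω, X ω)) P₀ = Measure.map (fun ω => (C ω, X ω)) Ps)
    -- sharp condition: in every regime, for every bounded measurable h : {0,1} → ℝ,
    -- E_{P_σ}[h(T) | σ(C, X)] = E_{P_σ}[h(T) | σ(X)] a.s.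
    (hsharp : ∀ P ∈ ({P₀, P₁, Ps} : Set (Measure Ω)), ∀ h : Fin 2 → ℝ,
      P[(fun ω => h (T ω)) | MeasurableSpace.comap (fun ω => (C ω, X ω)) inferInstance]
        =ᵐ[P] P[(fun ω => h (T ω)) | MeasurableSpace.comap X inferInstance]) :
    ∀ h : 𝒞 → ℝ, Measurable h → (∃ M, ∀ c, |h c| ≤ M) →
      ∃ w : ℝ × Fin 2 → ℝ, Measurable w ∧
        ∀ P ∈ ({P₀, P₁, Ps} : Set (Measure Ω)),
          (fun ω => w (X ω, T ω)) =ᵐ[P]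
            P[(fun ω => h (C ω)) |
              MeasurableSpace.comap (fun ω => (X ω, T ω)) inferInstance] := by
  rintro h hh ⟨M, hM⟩
  obtain ⟨ω₀⟩ := nonempty_of_isProbabilityMeasure P₀
  have : Nonempty 𝒞 := ⟨C ω₀⟩
  refine ⟨fun p => ∫ c, h c ∂condDistrib C X P₀ p.1,
    hh.stronglyMeasurable.integral_kernel.measurable.comp measurable_fst,
    fun P hP => ?_⟩
  obtain ⟨hP_prob, hP_law⟩ : IsProbabilityMeasure P ∧
      P.map (fun ω => (C ω, X ω)) = P₀.map (fun ω => (C ω, X ω)) := by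
    rcases hP with rfl | rfl | rfl
    exacts [⟨‹_›, rfl⟩, ⟨‹_›, h4a.1.symm⟩, ⟨‹_›, h4a.2.symm⟩]
  have hswap (Q : Measure Ω) :
      Q.map (fun ω => (X ω, C ω)) = (Q.map fun ω => (C ω, X ω)).map Prod.swap := by
    rw [Measure.map_map measurable_swap (hC.prodMk hX)]; rfl
  have hP_law' : P₀.map (fun ω => (X ω, C ω)) = P.map (fun ω => (X ω, C ω)) := by
    rw [hswap, hswap, hP_law]
  have hXC_le_CX : MeasurableSpace.comap X inferInstance ≤
      MeasurableSpace.comap (fun ω => (C ω, X ω)) inferInstance :=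
    le_sup_right.trans_eq (MeasurableSpace.comap_prodMk C X).symm
  have hhC : ∀ᵐ ω ∂P, ‖h (C ω)‖ ≤ M := .of_forall fun ω => hM (C ω)
  calc (fun ω => ∫ c, h c ∂condDistrib C X P₀ (X ω))
      = fun ω => ∫ c, h c ∂condDistrib C X P (X ω) := by
        rw [condDistrib_congr_of_map_eq hP_law']
    _ =ᵐ[P] P[fun ω => h (C ω) | MeasurableSpace.comap X inferInstance] :=
        (condExp_ae_eq_integral_condDistrib hX hC.aemeasurable hh.stronglyMeasurable
          (.of_bound (hh.comp hC).aestronglyMeasurable M hhC)).symm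
    _ =ᵐ[P] _ := (condExp_comap_prodMk_ae_eq_condExp_comap hT hXC_le_CX (hC.prodMk hX).comap_le
        ((hh.comp measurable_fst).comp (Measurable.of_comap_le le_rfl)).stronglyMeasurable
        hhC (hsharp P hP)).symm

/-- key step (10) in the proof of Theorem 4.4: covariates `(C, X)` with
regime-independent joint law plus the sharp-design condition `T ⫫ C | (X, Σ)` imply
`C ⫫ Σ | (X, T)`: for every bounded measurable `h` on `𝒞` there is a single measurable
`w : ℝ × {0,1} → ℝ` such that `w(X, T)` is a version of `E_{P_σ}[h(C) | σ(X, T)]` in every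
regime `σ ∈ {0, 1, s}`. -/
theorem sharp_rdd_C_indep_regime_given_XT
    {Ω 𝒞 : Type*} [MeasurableSpace Ω] [MeasurableSpace 𝒞] [StandardBorelSpace 𝒞]
    (C : Ω → 𝒞) (X : Ω → ℝ) (T : Ω → Fin 2)
    (hC : Measurable C) (hX : Measurable X) (hT : Measurable T)
    (P₀ P₁ Ps : Measure Ω)
    [IsProbabilityMeasure P₀] [IsProbabilityMeasure P₁] [IsProbabilityMeasure Ps]
    (hT0 : P₀ {ω | T ω = 0} = 1) (hT1 : P₁ {ω | T ω = 1} = 1)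
    -- (4a): the joint law of (C, X) is the same in all three regimes
    (h4a : Measure.map (fun ω => (C ω, X ω)) P₀ = Measure.map (fun ω => (C ω, X ω)) P₁ ∧
           Measure.map (fun ω => (C ω, X ω)) P₀ = Measure.map (fun ω => (C ω, X ω)) Ps)
    -- sharp condition: in every regime, for every bounded measurable h : {0,1} → ℝ,
    -- E_{P_σ}[h(T) | σ(C, X)] = E_{P_σ}[h(T) | σ(X)] a.s.
    (hsharp : ∀ P ∈ ({P₀, P₁, Ps} : Set (Measure Ω)), ∀ h : Fin 2 → ℝ,
      P[(fun ω => h (T ω)) | MeasurableSpace.comap (fun ω => (C ω, X ω)) inferInstance]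
        =ᵐ[P] P[(fun ω => h (T ω)) | MeasurableSpace.comap X inferInstance]) :
    ∀ h : 𝒞 → ℝ, Measurable h → (∃ M, ∀ c, |h c| ≤ M) →
      ∃ w : ℝ × Fin 2 → ℝ, Measurable w ∧
        ∀ P ∈ ({P₀, P₁, Ps} : Set (Measure Ω)),
          (fun ω => w (X ω, T ω)) =ᵐ[P]
            P[(fun ω => h (C ω)) |
              MeasurableSpace.comap (fun ω => (X ω, T ω)) inferInstance] :=
  sharp_rdd_C_indep_regime_given_XT_general C X T hC hX hT P₀ P₁ Ps h4a hsharp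
end

section
/- Let C, X, T, Y be random variables on a measurable space (Ω, 𝓕) with C valued in a standard Borel space 𝒞, X in ℝ, T in {0,1}, Y in ℝ, and let P₀, P₁, P_f be probability measures with P₀(T=0)=1, P₁(T=1)=1, Y integrable under each, and suppose (C, X) are strongly sufficient covariates: the joint law of (C, X) is the same under P₀, P₁, P_f; some measurable u(C, X, T) is simultaneously a version of E_{P_σ}[Y | σ(C, X, T)] for all σ ∈ {0, 1, f}; and P_f(T = t | C, X) > 0 a.s. for t = 0, 1. Let k : 𝒞×ℝ×{0,1} → ℝ be measurable with k(C, X, T) a version of E_{P_f}[Y | σ(C, X, T)]. Then for each t ∈ {0, 1}, any measurable m_t : ℝ → ℝ such that m_t(X) is a version of E_{P_t}[Y | σ(X)] satisfies: m_t(X) is a version of E_{P_f}[k(C, X, t) | σ(X)] under P_f. -/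
/-!
Under `P_t` the treatment is a.s. `t`, so by the tower property `m_t(X)` is a version of
`E_{P_t}[u(C, X, t) | X]`. A conditional expectation of a function of `(C, X)` given a function
of `(C, X)` is determined by the law of `(C, X)`, which `P_t` and `P_f` share; hence `m_t(X)` is
also a version of `E_{P_f}[u(C, X, t) | X]`. Finally `k(C, X, t) = u(C, X, t)` `P_f`-a.s.: both
are versions of `E_{P_f}[Y | C, X, T]`, so they agree on `{T = t}`, and an event in `σ(C, X)`
missing `{T = t}` up to a null set is null because `P_f(T = t | C, X) > 0`.
-/

open MeasureTheory

section ConditionalProbability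

variable {Ω : Type*} {m m₀ : MeasurableSpace Ω} {μ : Measure Ω} [IsFiniteMeasure μ]

lemma measure_eq_zero_of_condExp_indicator_pos (hm : m ≤ m₀) {s S : Set Ω}
    (hs : MeasurableSet[m] s) (hS : MeasurableSet S)
    (hpos : ∀ᵐ ω ∂μ, 0 < μ[S.indicator (1 : Ω → ℝ) | m] ω) (hSs : μ (S ∩ s) = 0) : μ s = 0 := by
  have hint : ∫ ω in s, μ[S.indicator (1 : Ω → ℝ) | m] ω ∂μ = 0 := by
    rw [setIntegral_condExp hm ((integrable_const 1).indicator hS) hs,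
      integral_indicator_one hS, measureReal_restrict_apply hS, measureReal_def, hSs,
      ENNReal.toReal_zero]
  have hzero : μ[S.indicator (1 : Ω → ℝ) | m] =ᵐ[μ.restrict s] 0 :=
    (setIntegral_eq_zero_iff_of_nonneg_ae
      (ae_restrict_of_ae (condExp_nonneg (.of_forall (Set.indicator_nonneg
        fun _ _ => zero_le_one)))) integrable_condExp.integrableOn).mp hint
  have hfalse : ∀ᵐ ω ∂μ.restrict s, False := by
    filter_upwards [hzero, ae_restrict_of_ae hpos] with ω h0 hpos
    exact (h0 ▸ hpos).false
  rw [← Measure.restrict_apply_univ, ae_eq_bot.mp (Filter.eventually_false_iff_eq_bot.mp hfalse),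
    Measure.coe_zero, Pi.zero_apply]

lemma ae_of_ae_imp_of_condExp_indicator_pos (hm : m ≤ m₀) {S : Set Ω} (hS : MeasurableSet S)
    {p : Ω → Prop} (hp : MeasurableSet[m] {ω | p ω})
    (hpos : ∀ᵐ ω ∂μ, 0 < μ[S.indicator (1 : Ω → ℝ) | m] ω) (h : ∀ᵐ ω ∂μ, ω ∈ S → p ω) :
    ∀ᵐ ω ∂μ, p ω :=
  ae_iff.mpr <| measure_eq_zero_of_condExp_indicator_pos hm hp.compl hS hpos
    (by simp only [ae_iff, Classical.not_imp] at h; exact h)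

lemma condExp_indicator_compl_one (hm : m ≤ m₀) {s : Set Ω} (hs : MeasurableSet s) :
    μ[sᶜ.indicator (1 : Ω → ℝ) | m] =ᵐ[μ] 1 - μ[s.indicator (1 : Ω → ℝ) | m] := by
  rw [Set.indicator_compl]
  filter_upwards [condExp_sub (m := m) (integrable_const (1 : ℝ))
    ((integrable_const 1).indicator hs)] with ω hω
  simpa only [Pi.one_def, condExp_const hm] using hω

end ConditionalProbability

section LawTransfer

variable {Ω α β : Type*} [MeasurableSpace Ω] [MeasurableSpace α] [MeasurableSpace β]
  {μ ν : Measure Ω} {Z : Ω → α}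

lemma integrable_comp_of_map_eq (hZ : Measurable Z) (hlaw : μ.map Z = ν.map Z) {G : α → ℝ}
    (hG : Measurable G) (h : Integrable (fun ω => G (Z ω)) μ) :
    Integrable (fun ω => G (Z ω)) ν := by
  have hmap := (integrable_map_measure hG.aestronglyMeasurable hZ.aemeasurable).mpr h
  rw [hlaw] at hmap
  exact (integrable_map_measure hG.aestronglyMeasurable hZ.aemeasurable).mp hmap

lemma setIntegral_comp_preimage_of_map_eq (hZ : Measurable Z) (hlaw : μ.map Z = ν.map Z)
    {G : α → ℝ} (hG : Measurable G) {s : Set α} (hs : MeasurableSet s) :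
    ∫ ω in Z ⁻¹' s, G (Z ω) ∂μ = ∫ ω in Z ⁻¹' s, G (Z ω) ∂ν := by
  rw [← setIntegral_map hs hG.aestronglyMeasurable hZ.aemeasurable, hlaw,
    setIntegral_map hs hG.aestronglyMeasurable hZ.aemeasurable]

lemma ae_eq_condExp_comp_of_map_eq [IsFiniteMeasure μ] [IsFiniteMeasure ν]
    (hZ : Measurable Z) (hlaw : μ.map Z = ν.map Z) {h : α → β} (hh : Measurable h)
    {F : α → ℝ} (hF : Measurable F) {g : β → ℝ} (hg : Measurable g)
    (hint : Integrable (fun ω => F (Z ω)) μ)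
    (hver : (fun ω => g (h (Z ω))) =ᵐ[μ]
      μ[fun ω => F (Z ω) | MeasurableSpace.comap (fun ω => h (Z ω)) inferInstance]) :
    (fun ω => g (h (Z ω))) =ᵐ[ν]
      ν[fun ω => F (Z ω) | MeasurableSpace.comap (fun ω => h (Z ω)) inferInstance] := by
  have hmX : MeasurableSpace.comap (fun ω => h (Z ω)) inferInstance ≤ ‹MeasurableSpace Ω› :=
    (hh.comp hZ).comap_le
  have hgint : Integrable (fun ω => g (h (Z ω))) μ := integrable_condExp.congr hver.symm
  refine ae_eq_condExp_of_forall_setIntegral_eq hmX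
    (integrable_comp_of_map_eq hZ hlaw hF hint)
    (fun _ _ _ => (integrable_comp_of_map_eq hZ hlaw (hg.comp hh) hgint).integrableOn) ?_
    (hg.comp (Measurable.of_comap_le le_rfl)).aestronglyMeasurable
  rintro _ ⟨A, hA, rfl⟩ -
  calc ∫ ω in Z ⁻¹' (h ⁻¹' A), g (h (Z ω)) ∂ν
      = ∫ ω in Z ⁻¹' (h ⁻¹' A), g (h (Z ω)) ∂μ :=
        (setIntegral_comp_preimage_of_map_eq hZ hlaw (hg.comp hh) (hh hA)).symm
    _ = ∫ ω in Z ⁻¹' (h ⁻¹' A), F (Z ω) ∂μ := by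
        rw [setIntegral_congr_ae (hZ (hh hA)) (hver.mono fun _ hω _ => hω)]
        exact setIntegral_condExp hmX hint ⟨A, hA, rfl⟩
    _ = ∫ ω in Z ⁻¹' (h ⁻¹' A), F (Z ω) ∂ν :=
        setIntegral_comp_preimage_of_map_eq hZ hlaw hF (hh hA)

end LawTransfer

section FuzzyRDD

variable {Ω 𝒞 β τ : Type*} [MeasurableSpace Ω] [MeasurableSpace 𝒞] [MeasurableSpace β]
  [MeasurableSpace τ] [MeasurableSingletonClass τ] {C : Ω → 𝒞} {X : Ω → β} {T : Ω → τ}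

theorem ae_eq_condExp_observational_of_interventional
    (hC : Measurable C) (hX : Measurable X) (hT : Measurable T) {Y : Ω → ℝ}
    {Pt Pf : Measure Ω} [IsFiniteMeasure Pt] [IsFiniteMeasure Pf] {t : τ}
    (hTt : ∀ᵐ ω ∂Pt, T ω = t)
    (hlaw : Pt.map (fun ω => (C ω, X ω)) = Pf.map (fun ω => (C ω, X ω)))
    {u : 𝒞 × β × τ → ℝ} (hu : Measurable u)
    (hut : (fun ω => u (C ω, X ω, T ω)) =ᵐ[Pt]
      Pt[Y | MeasurableSpace.comap (fun ω => (C ω, X ω, T ω)) inferInstance])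
    (huf : (fun ω => u (C ω, X ω, T ω)) =ᵐ[Pf]
      Pf[Y | MeasurableSpace.comap (fun ω => (C ω, X ω, T ω)) inferInstance])
    (hpos : ∀ᵐ ω ∂Pf, 0 < Pf[{ω | T ω = t}.indicator (1 : Ω → ℝ) |
      MeasurableSpace.comap (fun ω => (C ω, X ω)) inferInstance] ω)
    {k : 𝒞 × β × τ → ℝ} (hk : Measurable k)
    (hkf : (fun ω => k (C ω, X ω, T ω)) =ᵐ[Pf]
      Pf[Y | MeasurableSpace.comap (fun ω => (C ω, X ω, T ω)) inferInstance])
    {mt : β → ℝ} (hmt : Measurable mt)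
    (hver : (fun ω => mt (X ω)) =ᵐ[Pt] Pt[Y | MeasurableSpace.comap X inferInstance]) :
    (fun ω => mt (X ω)) =ᵐ[Pf]
      Pf[fun ω => k (C ω, X ω, t) | MeasurableSpace.comap X inferInstance] := by
  have hZ : Measurable fun ω => (C ω, X ω) := hC.prodMk hX
  have hW : Measurable fun ω => (C ω, X ω, T ω) := hC.prodMk (hX.prodMk hT)
  have hslice : ∀ {f : 𝒞 × β × τ → ℝ}, Measurable f →
      Measurable fun z : 𝒞 × β => f (z.1, z.2, t) :=
    fun hf => hf.comp (measurable_fst.prodMk (measurable_snd.prodMk measurable_const))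
  have hku : (fun ω => k (C ω, X ω, t)) =ᵐ[Pf] fun ω => u (C ω, X ω, t) :=
    ae_of_ae_imp_of_condExp_indicator_pos hZ.comap_le (hT (measurableSet_singleton t))
      ⟨_, measurableSet_eq_fun (hslice hk) (hslice hu), rfl⟩ hpos
      ((hkf.trans huf.symm).mono fun ω h hω => by rwa [← show T ω = t from hω])
  have hu_slice : (fun ω => u (C ω, X ω, T ω)) =ᵐ[Pt] fun ω => u (C ω, X ω, t) :=
    hTt.mono fun ω hω => congrArg (fun s => u (C ω, X ω, s)) hω
  have hXW : MeasurableSpace.comap X inferInstance ≤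
      MeasurableSpace.comap (fun ω => (C ω, X ω, T ω)) inferInstance :=
    Measurable.comap_le <| (measurable_fst.comp measurable_snd).comp
      (f := fun ω => (C ω, X ω, T ω)) (Measurable.of_comap_le le_rfl)
  have hPt : (fun ω => mt (X ω)) =ᵐ[Pt]
      Pt[fun ω => u (C ω, X ω, t) | MeasurableSpace.comap X inferInstance] :=
    hver.trans <| (condExp_condExp_of_le hXW hW.comap_le).symm.trans
      (condExp_congr_ae (hut.symm.trans hu_slice))
  exact (ae_eq_condExp_comp_of_map_eq hZ hlaw measurable_snd (hslice hu) hmt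
    (integrable_condExp.congr (hut.symm.trans hu_slice)) hPt).trans (condExp_congr_ae hku.symm)

end FuzzyRDD

theorem fuzzy_rdd_interventional_regression_on_X_identified_general
    {Ω 𝒞 : Type*} [MeasurableSpace Ω] [MeasurableSpace 𝒞]
    (C : Ω → 𝒞) (X : Ω → ℝ) (T : Ω → Fin 2) (Y : Ω → ℝ)
    (hC : Measurable C) (hX : Measurable X) (hT : Measurable T)
    (P₀ P₁ Pf : Measure Ω)
    [IsProbabilityMeasure P₀] [IsProbabilityMeasure P₁] [IsProbabilityMeasure Pf]
    (hT0 : P₀ {ω | T ω = 0} = 1) (hT1 : P₁ {ω | T ω = 1} = 1)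
    -- strongly sufficient covariates:
    (h4a : Measure.map (fun ω => (C ω, X ω)) P₀ = Measure.map (fun ω => (C ω, X ω)) P₁ ∧
           Measure.map (fun ω => (C ω, X ω)) P₀ = Measure.map (fun ω => (C ω, X ω)) Pf)
    (u : 𝒞 × ℝ × Fin 2 → ℝ) (hu_meas : Measurable u)
    (h4b : ∀ P ∈ ({P₀, P₁, Pf} : Set (Measure Ω)),
      (fun ω => u (C ω, X ω, T ω)) =ᵐ[P]
        P[Y | MeasurableSpace.comap (fun ω => (C ω, X ω, T ω)) inferInstance])
    (p : 𝒞 × ℝ → ℝ)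
    (hp_ver : (fun ω => p (C ω, X ω)) =ᵐ[Pf]
      Pf[(fun ω => if T ω = 1 then (1 : ℝ) else 0) |
        MeasurableSpace.comap (fun ω => (C ω, X ω)) inferInstance])
    (hp_pos : ∀ᵐ ω ∂Pf, 0 < p (C ω, X ω) ∧ p (C ω, X ω) < 1)
    -- k(C, X, T) is a version of E_{P_f}[Y | σ(C, X, T)]
    (k : 𝒞 × ℝ × Fin 2 → ℝ) (hk_meas : Measurable k)
    (hk : (fun ω => k (C ω, X ω, T ω)) =ᵐ[Pf]
      Pf[Y | MeasurableSpace.comap (fun ω => (C ω, X ω, T ω)) inferInstance]) :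
    ∀ t : Fin 2, ∀ mt : ℝ → ℝ, Measurable mt →
      ((fun ω => mt (X ω)) =ᵐ[if t = 0 then P₀ else P₁]
        (if t = 0 then P₀ else P₁)[Y | MeasurableSpace.comap X inferInstance]) →
      (fun ω => mt (X ω)) =ᵐ[Pf]
        Pf[(fun ω => k (C ω, X ω, t)) | MeasurableSpace.comap X inferInstance] := by
  intro t mt hmt hver
  have hT₁ : MeasurableSet {ω | T ω = 1} := hT (measurableSet_singleton 1)
  have hprop : (fun ω => if T ω = 1 then (1 : ℝ) else 0) = {ω | T ω = 1}.indicator 1 := by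
    ext ω; simp [Set.indicator_apply]
  rw [hprop] at hp_ver
  have hT₀ : {ω | T ω = 0} = {ω | T ω = 1}ᶜ := by
    ext ω; simp only [Set.mem_ofPred_eq, Set.mem_compl_iff]; omega
  fin_cases t
  · refine ae_eq_condExp_observational_of_interventional hC hX hT
      ((mem_ae_iff_prob_eq_one (hT (measurableSet_singleton 0))).mpr hT0) h4a.2 hu_meas
      (h4b P₀ (by simp)) (h4b Pf (by simp)) ?_ hk_meas hk hmt hver
    rw [hT₀]
    filter_upwards [condExp_indicator_compl_one (hC.prodMk hX).comap_le hT₁, hp_ver, hp_pos]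
      with ω hcompl hp hpos
    rw [hcompl, Pi.sub_apply, ← hp, Pi.one_apply, sub_pos]
    exact hpos.2
  · refine ae_eq_condExp_observational_of_interventional hC hX hT
      ((mem_ae_iff_prob_eq_one (hT (measurableSet_singleton 1))).mpr hT1)
      (h4a.1.symm.trans h4a.2) hu_meas (h4b P₁ (by simp)) (h4b Pf (by simp)) ?_ hk_meas hk hmt
      hver
    filter_upwards [hp_ver, hp_pos] with ω hp hpos
    exact hp ▸ hpos.1

/-- intermediate identity in the fuzzy RDD: with `(C, X)` strongly
sufficient covariates and `k(C, X, T)` a version of `E_{P_f}[Y | σ(C, X, T)]`, for each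
`t ∈ {0, 1}` any version `m_t(X)` of `E_{P_t}[Y | σ(X)]` is also a version of
`E_{P_f}[k(C, X, t) | σ(X)]` under the observational regime `P_f`. -/
theorem fuzzy_rdd_interventional_regression_on_X_identified
    {Ω 𝒞 : Type*} [MeasurableSpace Ω] [MeasurableSpace 𝒞] [StandardBorelSpace 𝒞]
    (C : Ω → 𝒞) (X : Ω → ℝ) (T : Ω → Fin 2) (Y : Ω → ℝ)
    (hC : Measurable C) (hX : Measurable X) (hT : Measurable T) (hY : Measurable Y)
    (P₀ P₁ Pf : Measure Ω)
    [IsProbabilityMeasure P₀] [IsProbabilityMeasure P₁] [IsProbabilityMeasure Pf]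
    (hT0 : P₀ {ω | T ω = 0} = 1) (hT1 : P₁ {ω | T ω = 1} = 1)
    (hYint : ∀ P ∈ ({P₀, P₁, Pf} : Set (Measure Ω)), Integrable Y P)
    -- strongly sufficient covariates:
    (h4a : Measure.map (fun ω => (C ω, X ω)) P₀ = Measure.map (fun ω => (C ω, X ω)) P₁ ∧
           Measure.map (fun ω => (C ω, X ω)) P₀ = Measure.map (fun ω => (C ω, X ω)) Pf)
    (u : 𝒞 × ℝ × Fin 2 → ℝ) (hu_meas : Measurable u)
    (h4b : ∀ P ∈ ({P₀, P₁, Pf} : Set (Measure Ω)),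
      (fun ω => u (C ω, X ω, T ω)) =ᵐ[P]
        P[Y | MeasurableSpace.comap (fun ω => (C ω, X ω, T ω)) inferInstance])
    (p : 𝒞 × ℝ → ℝ) (hp_meas : Measurable p) (hp_range : ∀ z, p z ∈ Set.Icc (0 : ℝ) 1)
    (hp_ver : (fun ω => p (C ω, X ω)) =ᵐ[Pf]
      Pf[(fun ω => if T ω = 1 then (1 : ℝ) else 0) |
        MeasurableSpace.comap (fun ω => (C ω, X ω)) inferInstance])
    (hp_pos : ∀ᵐ ω ∂Pf, 0 < p (C ω, X ω) ∧ p (C ω, X ω) < 1)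
    -- k(C, X, T) is a version of E_{P_f}[Y | σ(C, X, T)]
    (k : 𝒞 × ℝ × Fin 2 → ℝ) (hk_meas : Measurable k)
    (hk : (fun ω => k (C ω, X ω, T ω)) =ᵐ[Pf]
      Pf[Y | MeasurableSpace.comap (fun ω => (C ω, X ω, T ω)) inferInstance]) :
    ∀ t : Fin 2, ∀ mt : ℝ → ℝ, Measurable mt →
      ((fun ω => mt (X ω)) =ᵐ[if t = 0 then P₀ else P₁]
        (if t = 0 then P₀ else P₁)[Y | MeasurableSpace.comap X inferInstance]) →
      (fun ω => mt (X ω)) =ᵐ[Pf]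
        Pf[(fun ω => k (C ω, X ω, t)) | MeasurableSpace.comap X inferInstance] :=
  fuzzy_rdd_interventional_regression_on_X_identified_general C X T Y hC hX hT P₀ P₁ Pf hT0 hT1 h4a
    u hu_meas h4b p hp_ver hp_pos k hk_meas hk
end
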